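/- arXiv:1301.7106 — 7 statements merged into one kernel-verified Lean document; each statement's English description precedes it below -/
import Mathlib

section
/- Let k be an algebraically closed field, R a positively graded k-algebra with dim_k R_1 > 1, M a graded R-module, and i ≥ 0 a fixed integer. Assume that for every non-zero element ℓ ∈ R_1 the multiplication map M_i → M_{i+1} induced by ℓ is injective. Then for every non-zero finite-dimensional k-subspace V of M_i one has dim_k (R_1·V) > dim_k V, where R_1·V denotes the k-span of all products ℓv with ℓ ∈ R_1 and v ∈ V. -/
section Aux

variable {k : Type*} [Field k] {A : Type*} [Ring A] [Algebra k A]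
    {M : Type*} [AddCommGroup M] [Module A M] [Module k M] [IsScalarTower k A M]

lemma aux_smul_comm (a : A) (c : k) (m : M) : a • (c • m) = c • (a • m) := by
  rw [algebra_compatible_smul A c m, ← smul_assoc, smul_eq_mul, ← Algebra.commutes,
    ← smul_eq_mul, smul_assoc, ← algebra_compatible_smul A c (a • m)]

end Aux

/-- If `R` is a positively graded algebra over an algebraically closed field `k` with
`dim_k R₁ > 1`, `M` a graded `R`-module such that every nonzero `ℓ ∈ R₁` multiplies
injectively from `M_i` to `M_{i+1}`, then for every nonzero finite-dimensional
`k`-subspace `V ⊆ M_i` one has `dim_k (R₁·V) > dim_k V`. -/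
theorem stmt1 (k : Type*) [Field k] [IsAlgClosed k]
    (A : Type*) [Ring A] [Algebra k A]
    (𝒜 : ℕ → Submodule k A) [GradedAlgebra 𝒜]
    (M : Type*) [AddCommGroup M] [Module A M] [Module k M] [IsScalarTower k A M]
    (ℳ : ℕ → Submodule k M) [SetLike.GradedSMul 𝒜 ℳ] [DirectSum.Decomposition ℳ]
    (h1 : 1 < Module.rank k (𝒜 1))
    (i : ℕ)
    (hinj : ∀ ℓ ∈ 𝒜 1, ℓ ≠ 0 → ∀ v ∈ ℳ i, ℓ • v = 0 → v = 0)
    (V : Submodule k M) (hV : V ≤ ℳ i) (hV0 : V ≠ ⊥) [FiniteDimensional k V] :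
    Module.rank k V <
      Module.rank k (Submodule.span k {x : M | ∃ ℓ ∈ 𝒜 1, ∃ v ∈ V, x = ℓ • v}) := by
  set S : Set M := {x : M | ∃ ℓ ∈ 𝒜 1, ∃ v ∈ V, x = ℓ • v} with hS
  set W : Submodule k M := Submodule.span k S with hW
  -- pick two linearly independent elements of 𝒜 1
  have hnt : Nontrivial (𝒜 1) := by
    rw [← rank_pos_iff_nontrivial (R := k)]
    exact lt_trans zero_lt_one h1
  obtain ⟨x₀, hx₀⟩ := exists_ne (0 : 𝒜 1)
  obtain ⟨x₁, hx01⟩ := exists_linearIndependent_pair_of_one_lt_rank h1 hx₀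
  have hindep : ∀ a : k, a • x₀ ≠ x₁ := (LinearIndependent.pair_iff' hx₀).mp hx01
  set ℓ₀ : A := (x₀ : A) with hℓ₀
  set ℓ₁ : A := (x₁ : A) with hℓ₁
  have hℓ₀mem : ℓ₀ ∈ 𝒜 1 := x₀.2
  have hℓ₁mem : ℓ₁ ∈ 𝒜 1 := x₁.2
  have hℓ₀ne : ℓ₀ ≠ 0 := fun h => hx₀ (Subtype.ext h)
  -- the multiplication maps V → W
  have hmem : ∀ (ℓ : A), ℓ ∈ 𝒜 1 → ∀ v : V, ℓ • (v : M) ∈ W := fun ℓ hℓ v =>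
    Submodule.subset_span ⟨ℓ, hℓ, (v : M), v.2, rfl⟩
  let Lmap : ∀ (ℓ : A), ℓ ∈ 𝒜 1 → (V →ₗ[k] W) := fun ℓ hℓ =>
    { toFun := fun v => ⟨ℓ • (v : M), hmem ℓ hℓ v⟩
      map_add' := fun v w => by
        ext; simp [smul_add]
      map_smul' := fun c v => by
        ext; simp [aux_smul_comm] }
  have hLmap : ∀ (ℓ : A) (hℓ : ℓ ∈ 𝒜 1) (v : V), ((Lmap ℓ hℓ v : W) : M) = ℓ • (v : M) :=
    fun ℓ hℓ v => rfl
  -- injectivity of multiplication by a nonzero ℓ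
  have hinj' : ∀ (ℓ : A) (hℓ : ℓ ∈ 𝒜 1), ℓ ≠ 0 → Function.Injective (Lmap ℓ hℓ) := by
    intro ℓ hℓ hℓne
    rw [← LinearMap.ker_eq_bot, Submodule.eq_bot_iff]
    intro v hv
    have h0 : ℓ • (v : M) = 0 := congrArg Subtype.val hv
    exact Subtype.ext (hinj ℓ hℓ hℓne (v : M) (hV v.2) h0)
  have hΦinj : Function.Injective (Lmap ℓ₀ hℓ₀mem) := hinj' ℓ₀ hℓ₀mem hℓ₀ne
  -- by contradiction
  by_contra hcon
  push_neg at hcon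
  have hVfin : Module.rank k V < Cardinal.aleph0 := Module.rank_lt_aleph0 k V
  haveI hWnoeth : IsNoetherian k W :=
    IsNoetherian.iff_rank_lt_aleph0.mpr (lt_of_le_of_lt hcon hVfin)
  haveI hWfin : Module.Finite k W := inferInstance
  have hfr1 : Module.finrank k V ≤ Module.finrank k W :=
    LinearMap.finrank_le_finrank_of_injective hΦinj
  have hfr2 : Module.finrank k W ≤ Module.finrank k V := by
    have := Cardinal.toNat_le_toNat hcon hVfin
    simpa [Module.finrank] using this
  have hfr : Module.finrank k V = Module.finrank k W := le_antisymm hfr1 hfr2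
  have hΦsurj : Function.Surjective (Lmap ℓ₀ hℓ₀mem) :=
    (LinearMap.injective_iff_surjective_of_finrank_eq_finrank hfr).mp hΦinj
  let e : V ≃ₗ[k] W := LinearEquiv.ofBijective (Lmap ℓ₀ hℓ₀mem) ⟨hΦinj, hΦsurj⟩
  let g : Module.End k V := (e.symm : W →ₗ[k] V) ∘ₗ (Lmap ℓ₁ hℓ₁mem)
  have hntV : Nontrivial V := Submodule.nontrivial_iff_ne_bot.mpr hV0
  obtain ⟨μ, hμ⟩ := Module.End.exists_eigenvalue g
  obtain ⟨v, hv⟩ := hμ.exists_hasEigenvector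
  have hvne : (v : M) ≠ 0 := fun h => hv.right (Subtype.ext h)
  have hgv : g v = μ • v := hv.apply_eq_smul
  have he : Lmap ℓ₁ hℓ₁mem v = e (μ • v) := by
    have : e (g v) = Lmap ℓ₁ hℓ₁mem v := e.apply_symm_apply _
    rw [← this, hgv]
  have hM : ℓ₁ • (v : M) = (μ • ℓ₀) • (v : M) := by
    have := congrArg Subtype.val he
    have h2 : ((e (μ • v) : W) : M) = μ • (ℓ₀ • (v : M)) := by
      have : e (μ • v) = μ • e v := map_smul e μ v
      rw [this]
      rfl
    have this2 : ℓ₁ • (v : M) = ((e (μ • v) : W) : M) := this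
    rw [this2, h2, smul_assoc]
  set ℓ : A := ℓ₁ - μ • ℓ₀ with hℓ
  have hℓmem : ℓ ∈ 𝒜 1 := sub_mem hℓ₁mem (Submodule.smul_mem _ μ hℓ₀mem)
  have hℓne : ℓ ≠ 0 := by
    intro h
    apply hindep μ
    apply Subtype.ext
    have : ℓ₁ = μ • ℓ₀ := by rwa [sub_eq_zero] at h
    simpa using this.symm
  have hzero : ℓ • (v : M) = 0 := by
    rw [hℓ, sub_smul, hM, sub_self]
  exact hvne (hinj ℓ hℓmem hℓne (v : M) (hV v.2) hzero)
end

section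
/- Let k be a field, U = k[T1,T2], and for an even integer ℓ = 2m ≥ 4 let 𝔄_ℓ be the (ℓ-2)×ℓ matrix over U whose i-th row has T1 in column i, T2 in column i+2, and zeros elsewhere. Then the kernel of the U-linear map U^ℓ → U^{ℓ-2} given by 𝔄_ℓ is the free U-module generated by the two columns c and c', where c has entries c_{2j} = (-T1)^{j-1} T2^{m-j} in the even positions 2j (1 ≤ j ≤ m) and zeros in odd positions, and c' has entries c'_{2j-1} = (-T1)^{j-1} T2^{m-j} in the odd positions 2j-1 (1 ≤ j ≤ m) and zeros in even positions. -/
open MvPolynomial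

theorem aux_prime_X1 (k : Type*) [Field k] : Prime (X 1 : MvPolynomial (Fin 2) k) := by
  have h0 : Prime (X 0 : MvPolynomial (Fin 1) k) := by
    rw [← MulEquiv.prime_iff (finSuccEquiv k 0).toMulEquiv]
    show Prime ((finSuccEquiv k 0) (X 0))
    rw [finSuccEquiv_X_zero]
    exact Polynomial.prime_X
  rw [← MulEquiv.prime_iff (finSuccEquiv k 1).toMulEquiv]
  show Prime ((finSuccEquiv k 1) (X 1))
  have h1 : (X 1 : MvPolynomial (Fin 2) k) = X (Fin.succ 0) := rfl
  rw [h1, finSuccEquiv_X_succ, Polynomial.prime_C_iff]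
  exact h0

theorem aux_not_dvd (k : Type*) [Field k] :
    ¬ (X 1 : MvPolynomial (Fin 2) k) ∣ X 0 := by
  rintro ⟨q, hq⟩
  have := congrArg (eval (fun i : Fin 2 => if i = 0 then (1 : k) else 0)) hq
  simp at this

/-- Syzygies of the Toeplitz matrix `𝔄_ℓ` (row pattern `(T₁, 0, T₂)`) for even `ℓ = 2m`:
the kernel is the free module generated by the two explicit vectors `c`, `c'`
(supported on even, resp. odd, positions). Here `T₁ = X 0`, `T₂ = X 1`. -/
theorem stmt4 (k : Type*) [Field k] (m : ℕ) (hm : 2 ≤ m)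
    (𝔄 : Matrix (Fin (2 * m - 2)) (Fin (2 * m)) (MvPolynomial (Fin 2) k))
    (h𝔄 : ∀ i j, 𝔄 i j =
      if (j : ℕ) = (i : ℕ) then X 0 else if (j : ℕ) = (i : ℕ) + 2 then X 1 else 0)
    (c c' : Fin (2 * m) → MvPolynomial (Fin 2) k)
    (hc : ∀ p, c p = if (p : ℕ) % 2 = 1 then
      (-X 0) ^ ((p : ℕ) / 2) * (X 1) ^ (m - 1 - (p : ℕ) / 2) else 0)
    (hc' : ∀ p, c' p = if (p : ℕ) % 2 = 0 then
      (-X 0) ^ ((p : ℕ) / 2) * (X 1) ^ (m - 1 - (p : ℕ) / 2) else 0) :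
    LinearMap.ker 𝔄.mulVecLin = Submodule.span (MvPolynomial (Fin 2) k) {c, c'} ∧
      LinearIndependent (MvPolynomial (Fin 2) k) ![c, c'] := by
  have hX1 : Prime (X 1 : MvPolynomial (Fin 2) k) := aux_prime_X1 k
  have hX1ne : (X 1 : MvPolynomial (Fin 2) k) ≠ 0 := hX1.ne_zero
  have hndvd : ¬ (X 1 : MvPolynomial (Fin 2) k) ∣ X 0 := aux_not_dvd k
  have valmk : ∀ (a : ℕ) (h : a < 2 * m), ((⟨a, h⟩ : Fin (2 * m)) : ℕ) = a :=
    fun a h => rfl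
  -- value of a row of the matrix-vector product
  have rowval : ∀ (v : Fin (2 * m) → MvPolynomial (Fin 2) k) (i : ℕ) (hi : i < 2 * m - 2),
      (𝔄.mulVec v) ⟨i, hi⟩ =
        X 0 * v ⟨i, by omega⟩ + X 1 * v ⟨i + 2, by omega⟩ := by
    intro v i hi
    have key : ∀ j : Fin (2 * m), 𝔄 ⟨i, hi⟩ j * v j =
        (if j = (⟨i, by omega⟩ : Fin (2 * m)) then X 0 * v j else 0)
        + (if j = (⟨i + 2, by omega⟩ : Fin (2 * m)) then X 1 * v j else 0) := by
      intro j
      have valmk' : ((⟨i, hi⟩ : Fin (2 * m - 2)) : ℕ) = i := rfl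
      rw [h𝔄, valmk']
      by_cases h1 : (j : ℕ) = i
      · have hj1 : j = (⟨i, by omega⟩ : Fin (2 * m)) := Fin.ext h1
        have hj2 : j ≠ (⟨i + 2, by omega⟩ : Fin (2 * m)) := fun hh => by
          have h2 : (j : ℕ) = i + 2 := congrArg Fin.val hh
          omega
        rw [if_pos h1, if_pos hj1, if_neg hj2]; ring
      · by_cases h2 : (j : ℕ) = i + 2
        · have hj2 : j = (⟨i + 2, by omega⟩ : Fin (2 * m)) := Fin.ext h2
          have hj1 : j ≠ (⟨i, by omega⟩ : Fin (2 * m)) := fun hh => by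
            have h3 : (j : ℕ) = i := congrArg Fin.val hh
            omega
          rw [if_neg h1, if_pos h2, if_neg hj1, if_pos hj2]; ring
        · have hj1 : j ≠ (⟨i, by omega⟩ : Fin (2 * m)) :=
            fun hh => h1 (congrArg Fin.val hh)
          have hj2 : j ≠ (⟨i + 2, by omega⟩ : Fin (2 * m)) :=
            fun hh => h2 (congrArg Fin.val hh)
          rw [if_neg h1, if_neg h2, if_neg hj1, if_neg hj2]; ring
    calc (𝔄.mulVec v) ⟨i, hi⟩ = ∑ j : Fin (2 * m), 𝔄 ⟨i, hi⟩ j * v j := rfl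
      _ = ∑ j : Fin (2 * m),
          ((if j = (⟨i, by omega⟩ : Fin (2 * m)) then X 0 * v j else 0)
          + (if j = (⟨i + 2, by omega⟩ : Fin (2 * m)) then X 1 * v j else 0)) :=
        Finset.sum_congr rfl (fun j _ => key j)
      _ = X 0 * v ⟨i, by omega⟩ + X 1 * v ⟨i + 2, by omega⟩ := by
        rw [Finset.sum_add_distrib, Finset.sum_ite_eq', Finset.sum_ite_eq']
        simp
  -- row relations for kernel elements
  have row : ∀ (v : Fin (2 * m) → MvPolynomial (Fin 2) k), 𝔄.mulVec v = 0 →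
      ∀ (i : ℕ) (hi : i < 2 * m - 2),
      X 0 * v ⟨i, by omega⟩ + X 1 * v ⟨i + 2, by omega⟩ = 0 := by
    intro v hv i hi
    exact (rowval v i hi).symm.trans (congrFun hv _)
  -- the chain of relations
  have chain : ∀ (v : Fin (2 * m) → MvPolynomial (Fin 2) k), 𝔄.mulVec v = 0 →
      ∀ (r j : ℕ) (hj : 2 * j + r < 2 * m),
      X 1 ^ j * v ⟨2 * j + r, hj⟩ = (-X 0) ^ j * v ⟨r, by omega⟩ := by
    intro v hv r j
    induction j with
    | zero =>
      intro hj
      simp only [pow_zero, one_mul]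
      exact congrArg v (Fin.ext (show 2 * 0 + r = r by omega))
    | succ j ih =>
      intro hj
      have h0 := row v hv (2 * j + r) (by omega)
      have hidx : (⟨2 * j + r + 2, by omega⟩ : Fin (2 * m))
          = ⟨2 * (j + 1) + r, hj⟩ := Fin.ext (show 2 * j + r + 2 = 2 * (j + 1) + r by omega)
      rw [hidx] at h0
      have step : X 1 * v ⟨2 * (j + 1) + r, hj⟩ = -(X 0 * v ⟨2 * j + r, by omega⟩) := by
        linear_combination h0
      calc X 1 ^ (j + 1) * v ⟨2 * (j + 1) + r, hj⟩
          = X 1 ^ j * (X 1 * v ⟨2 * (j + 1) + r, hj⟩) := by ring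
        _ = X 1 ^ j * (-(X 0 * v ⟨2 * j + r, by omega⟩)) := by rw [step]
        _ = -X 0 * (X 1 ^ j * v ⟨2 * j + r, by omega⟩) := by ring
        _ = -X 0 * ((-X 0) ^ j * v ⟨r, by omega⟩) := by rw [ih (by omega)]
        _ = (-X 0) ^ (j + 1) * v ⟨r, by omega⟩ := by ring
  -- divisibility: extraction of the coefficient
  have key : ∀ (v : Fin (2 * m) → MvPolynomial (Fin 2) k), 𝔄.mulVec v = 0 →
      ∀ r : ℕ, r < 2 → ∃ g : MvPolynomial (Fin 2) k,
      ∀ (j : ℕ) (hj : 2 * j + r < 2 * m),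
        v ⟨2 * j + r, hj⟩ = (-X 0) ^ j * X 1 ^ (m - 1 - j) * g := by
    intro v hv r hr
    have htop := chain v hv r (m - 1) (by omega)
    have hdvd : (X 1 : MvPolynomial (Fin 2) k) ^ (m - 1) ∣ (-X 0) ^ (m - 1) * v ⟨r, by omega⟩ :=
      ⟨v ⟨2 * (m - 1) + r, by omega⟩, htop.symm⟩
    have hnd : ¬ (X 1 : MvPolynomial (Fin 2) k) ∣ (-X 0) ^ (m - 1) := by
      intro h
      have h2 : ((-X 0 : MvPolynomial (Fin 2) k)) ^ (m - 1) ∣ (X 0) ^ (m - 1) :=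
        pow_dvd_pow_of_dvd (neg_dvd.mpr dvd_rfl) _
      exact hndvd (hX1.dvd_of_dvd_pow (h.trans h2))
    obtain ⟨g, hg⟩ := hX1.pow_dvd_of_dvd_mul_left (m - 1) hnd hdvd
    refine ⟨g, fun j hj => ?_⟩
    have hch := chain v hv r j (by omega)
    have hcalc : X 1 ^ j * v ⟨2 * j + r, hj⟩
        = X 1 ^ j * ((-X 0) ^ j * X 1 ^ (m - 1 - j) * g) := by
      rw [hch, hg, show (X 1 : MvPolynomial (Fin 2) k) ^ (m - 1)
        = X 1 ^ j * X 1 ^ (m - 1 - j) from by rw [← pow_add]; congr 1; omega]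
      ring
    exact mul_left_cancel₀ (pow_ne_zero _ hX1ne) hcalc
  -- c and c' are in the kernel
  have hmemc : ∀ (w : Fin (2 * m) → MvPolynomial (Fin 2) k),
      ((∀ p, w p = if (p : ℕ) % 2 = 1 then
        (-X 0) ^ ((p : ℕ) / 2) * (X 1) ^ (m - 1 - (p : ℕ) / 2) else 0) ∨
      (∀ p, w p = if (p : ℕ) % 2 = 0 then
        (-X 0) ^ ((p : ℕ) / 2) * (X 1) ^ (m - 1 - (p : ℕ) / 2) else 0)) →
      𝔄.mulVec w = 0 := by
    intro w hw
    funext i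
    obtain ⟨iv, hi⟩ := i
    rw [rowval w iv hi]
    show X 0 * w ⟨iv, by omega⟩ + X 1 * w ⟨iv + 2, by omega⟩ = (0 : _)
    rcases hw with hw | hw <;>
      simp only [hw, valmk] <;>
      rcases Nat.mod_two_eq_zero_or_one iv with h | h
    · rw [if_neg (by omega), if_neg (by omega)]; ring
    · rw [if_pos h, if_pos (show (iv + 2) % 2 = 1 by omega),
        show (iv + 2) / 2 = iv / 2 + 1 from by omega,
        show m - 1 - iv / 2 = (m - 2 - iv / 2) + 1 from by omega,
        show m - 1 - (iv / 2 + 1) = m - 2 - iv / 2 from by omega]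
      ring
    · rw [if_pos h, if_pos (show (iv + 2) % 2 = 0 by omega),
        show (iv + 2) / 2 = iv / 2 + 1 from by omega,
        show m - 1 - iv / 2 = (m - 2 - iv / 2) + 1 from by omega,
        show m - 1 - (iv / 2 + 1) = m - 2 - iv / 2 from by omega]
      ring
    · rw [if_neg (by omega), if_neg (by omega)]; ring
  have hkc : 𝔄.mulVec c = 0 := hmemc c (Or.inl hc)
  have hkc' : 𝔄.mulVec c' = 0 := hmemc c' (Or.inr hc')
  constructor
  · apply le_antisymm
    · -- kernel ⊆ span
      intro v hv
      rw [LinearMap.mem_ker, Matrix.mulVecLin_apply] at hv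
      obtain ⟨ga, hga⟩ := key v hv 0 (by omega)
      obtain ⟨gb, hgb⟩ := key v hv 1 (by omega)
      rw [Submodule.mem_span_pair]
      refine ⟨gb, ga, ?_⟩
      funext p
      obtain ⟨pv, hp⟩ := p
      have hvp : v ⟨pv, hp⟩ =
          (-X 0) ^ (pv / 2) * X 1 ^ (m - 1 - pv / 2) *
            (if pv % 2 = 1 then gb else ga) := by
        rcases Nat.mod_two_eq_zero_or_one pv with h | h
        · rw [if_neg (by omega),
            show (⟨pv, hp⟩ : Fin (2 * m)) = ⟨2 * (pv / 2) + 0, by omega⟩ from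
              Fin.ext (show pv = 2 * (pv / 2) + 0 by omega)]
          exact hga (pv / 2) (by omega)
        · rw [if_pos h,
            show (⟨pv, hp⟩ : Fin (2 * m)) = ⟨2 * (pv / 2) + 1, by omega⟩ from
              Fin.ext (show pv = 2 * (pv / 2) + 1 by omega)]
          exact hgb (pv / 2) (by omega)
      show gb * c ⟨pv, hp⟩ + ga * c' ⟨pv, hp⟩ = v ⟨pv, hp⟩
      rw [hc ⟨pv, hp⟩, hc' ⟨pv, hp⟩, hvp]
      simp only [valmk]
      rcases Nat.mod_two_eq_zero_or_one pv with h | h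
      · rw [if_neg (by omega), if_pos h, if_neg (by omega)]; ring
      · rw [if_pos h, if_neg (by omega), if_pos h]; ring
    · -- span ⊆ kernel
      rw [Submodule.span_le]
      rintro x (rfl | rfl)
      · exact LinearMap.mem_ker.mpr ((Matrix.mulVecLin_apply 𝔄 x).trans hkc)
      · exact LinearMap.mem_ker.mpr ((Matrix.mulVecLin_apply 𝔄 x).trans hkc')
  · rw [LinearIndependent.pair_iff]
    intro s t hst
    have h0m : 0 < 2 * m := by omega
    have h1m : 1 < 2 * m := by omega
    have hc0 : c ⟨0, h0m⟩ = 0 := by rw [hc ⟨0, h0m⟩, valmk 0 h0m]; norm_num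
    have hc'0 : c' ⟨0, h0m⟩ = X 1 ^ (m - 1) := by
      rw [hc' ⟨0, h0m⟩, valmk 0 h0m]; norm_num
    have hc1 : c ⟨1, h1m⟩ = X 1 ^ (m - 1) := by
      rw [hc ⟨1, h1m⟩, valmk 1 h1m]; norm_num
    have hc'1 : c' ⟨1, h1m⟩ = 0 := by rw [hc' ⟨1, h1m⟩, valmk 1 h1m]; norm_num
    have h0 := congrFun hst ⟨0, h0m⟩
    have h1 := congrFun hst ⟨1, h1m⟩
    simp only [Pi.add_apply, Pi.smul_apply, smul_eq_mul, Pi.zero_apply, hc0, hc'0,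
      hc1, hc'1, mul_zero, zero_add, add_zero] at h0 h1
    have hpow : (X 1 : MvPolynomial (Fin 2) k) ^ (m - 1) ≠ 0 := pow_ne_zero _ hX1ne
    constructor
    · rcases mul_eq_zero.mp h1 with h | h
      · exact h
      · exact absurd h hpow
    · rcases mul_eq_zero.mp h0 with h | h
      · exact h
      · exact absurd h hpow
end

section
/- Let k be a field, U = k[T1,T2], and for an odd integer ℓ = 2m+1 ≥ 3 let 𝔄_ℓ be the (ℓ-2)×ℓ matrix over U whose i-th row has T1 in column i, T2 in column i+2, and zeros elsewhere. Then the kernel of the U-linear map U^ℓ → U^{ℓ-2} given by 𝔄_ℓ is the free U-module generated by two columns: one supported on the even-indexed positions with entries (-T1)^{j-1} T2^{m-j} at position 2j (1 ≤ j ≤ m), and one supported on the odd-indexed positions with entries (-T1)^{j-1} T2^{m+1-j} at position 2j-1 (1 ≤ j ≤ m+1). -/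
open MvPolynomial

private lemma primeX0 {k : Type*} [Field k] :
    Prime (X (0:Fin 2) : MvPolynomial (Fin 2) k) := by
  rw [← MulEquiv.prime_iff (finSuccEquiv k 1).toMulEquiv]
  simpa [finSuccEquiv_X_zero] using Polynomial.prime_X

private lemma X0_not_dvd_X1 {k : Type*} [Field k] :
    ¬ (X (0:Fin 2) : MvPolynomial (Fin 2) k) ∣ X 1 := by
  intro h
  have h2 := map_dvd (eval (fun i : Fin 2 => if i = 0 then (0:k) else 1)) h
  simp at h2

private lemma chain {k : Type*} [Field k] (n : ℕ) (v : ℕ → MvPolynomial (Fin 2) k)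
    (hv : ∀ j, j < n → X 0 * v j + X 1 * v (j+1) = 0) :
    ∃ f, ∀ j ≤ n, v j = (-X 0)^j * (X 1)^(n-j) * f := by
  induction n generalizing v with
  | zero =>
    refine ⟨v 0, fun j hj => ?_⟩
    interval_cases j; simp
  | succ n ih =>
    obtain ⟨g, hg⟩ := ih (fun j => v (j+1)) (fun j hj => hv (j+1) (by omega))
    have h1 : v 1 = (X 1)^n * g := by simpa using hg 0 (Nat.zero_le n)
    have h0 := hv 0 (Nat.succ_pos n)
    rw [h1] at h0
    have hdvd : (X 0 : MvPolynomial (Fin 2) k) ∣ g := by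
      have hd : (X 0 : MvPolynomial (Fin 2) k) ∣ X 1 ^ (n+1) * g :=
        ⟨-v 0, by linear_combination h0⟩
      rcases (primeX0.dvd_mul).mp hd with h | h
      · exact absurd (primeX0.dvd_of_dvd_pow h) X0_not_dvd_X1
      · exact h
    obtain ⟨h, rfl⟩ := hdvd
    refine ⟨-h, fun j hj => ?_⟩
    match j with
    | 0 =>
      have hx : (X (0:Fin 2) : MvPolynomial (Fin 2) k) ≠ 0 := X_ne_zero 0
      have hv0 : v 0 = -(X 1 ^ (n+1) * h) := by
        apply mul_left_cancel₀ hx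
        linear_combination h0
      rw [hv0]; simp
    | j+1 =>
      have hj' := hg j (by omega)
      simp only [Nat.succ_sub_succ]
      rw [hj', pow_succ]; ring

private lemma row {k : Type*} [Field k] {m : ℕ} (hm : 1 ≤ m)
    (𝔄 : Matrix (Fin (2 * m - 1)) (Fin (2 * m + 1)) (MvPolynomial (Fin 2) k))
    (h𝔄 : ∀ i j, 𝔄 i j =
      if (j : ℕ) = (i : ℕ) then X 0 else if (j : ℕ) = (i : ℕ) + 2 then X 1 else 0)
    (v : Fin (2 * m + 1) → MvPolynomial (Fin 2) k) (i : ℕ) (hi : i < 2 * m - 1) :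
    𝔄.mulVec v ⟨i, by omega⟩ =
      X 0 * v ⟨i, by omega⟩ + X 1 * v ⟨i + 2, by omega⟩ := by
  have key : ∀ j : Fin (2*m+1), 𝔄 ⟨i, by omega⟩ j * v j =
      (if j = (⟨i, by omega⟩ : Fin (2*m+1)) then X 0 * v j else 0)
      + (if j = (⟨i+2, by omega⟩ : Fin (2*m+1)) then X 1 * v j else 0) := by
    intro j
    rw [h𝔄]
    simp only [Fin.ext_iff]
    rcases eq_or_ne (j:ℕ) i with h | h <;> rcases eq_or_ne (j:ℕ) (i+2) with h2 | h2 <;>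
      simp [h, h2] <;> omega
  rw [Matrix.mulVec, dotProduct]
  simp_rw [key]
  rw [Finset.sum_add_distrib, Finset.sum_ite_eq', Finset.sum_ite_eq']
  simp

/-- Syzygies of the Toeplitz matrix `𝔄_ℓ` (row pattern `(T₁, 0, T₂)`) for odd
`ℓ = 2m+1`: the kernel is the free module generated by the two explicit vectors
supported on the even, resp. odd, positions. Here `T₁ = X 0`, `T₂ = X 1`. -/
theorem stmt5 (k : Type*) [Field k] (m : ℕ) (hm : 1 ≤ m)
    (𝔄 : Matrix (Fin (2 * m - 1)) (Fin (2 * m + 1)) (MvPolynomial (Fin 2) k))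
    (h𝔄 : ∀ i j, 𝔄 i j =
      if (j : ℕ) = (i : ℕ) then X 0 else if (j : ℕ) = (i : ℕ) + 2 then X 1 else 0)
    (c c' : Fin (2 * m + 1) → MvPolynomial (Fin 2) k)
    (hc : ∀ p, c p = if (p : ℕ) % 2 = 1 then
      (-X 0) ^ ((p : ℕ) / 2) * (X 1) ^ (m - 1 - (p : ℕ) / 2) else 0)
    (hc' : ∀ p, c' p = if (p : ℕ) % 2 = 0 then
      (-X 0) ^ ((p : ℕ) / 2) * (X 1) ^ (m - (p : ℕ) / 2) else 0) :
    LinearMap.ker 𝔄.mulVecLin = Submodule.span (MvPolynomial (Fin 2) k) {c, c'} ∧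
      LinearIndependent (MvPolynomial (Fin 2) k) ![c, c'] := by
  have ceval : ∀ (p : ℕ) (hp : p < 2*m+1), c ⟨p, hp⟩ =
      if p % 2 = 1 then (-X 0)^(p/2) * (X 1)^(m-1-p/2) else 0 := fun p hp => hc ⟨p, hp⟩
  have c'eval : ∀ (p : ℕ) (hp : p < 2*m+1), c' ⟨p, hp⟩ =
      if p % 2 = 0 then (-X 0)^(p/2) * (X 1)^(m-p/2) else 0 := fun p hp => hc' ⟨p, hp⟩
  constructor
  · apply le_antisymm
    · -- ker ⊆ span
      intro v hv
      rw [LinearMap.mem_ker, Matrix.mulVecLin_apply] at hv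
      have rel : ∀ i (hi : i < 2*m-1), X 0 * v ⟨i, by omega⟩ + X 1 * v ⟨i+2, by omega⟩ = 0 := by
        intro i hi
        have h2 := congrFun hv (⟨i, hi⟩ : Fin (2*m-1))
        rw [row hm 𝔄 h𝔄 v i hi] at h2
        simpa using h2
      set w : ℕ → MvPolynomial (Fin 2) k :=
        fun p => if h : p < 2*m+1 then v ⟨p, h⟩ else 0 with hw
      have relw : ∀ i, i < 2*m-1 → X 0 * w i + X 1 * w (i+2) = 0 := by
        intro i hi
        have h2 := rel i hi
        simp only [hw, dif_pos (show i < 2*m+1 by omega),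
          dif_pos (show i+2 < 2*m+1 by omega)]
        exact h2
      obtain ⟨f, hf⟩ := chain m (fun j => w (2*j)) (by
        intro j hj
        have h3 : 2*(j+1) = 2*j+2 := by ring
        simp only [h3]
        exact relw (2*j) (by omega))
      obtain ⟨g, hg⟩ := chain (m-1) (fun j => w (2*j+1)) (by
        intro j hj
        have h3 : 2*(j+1)+1 = 2*j+1+2 := by ring
        simp only [h3]
        exact relw (2*j+1) (by omega))
      rw [Submodule.mem_span_pair]
      refine ⟨g, f, ?_⟩
      funext p
      simp only [Pi.add_apply, Pi.smul_apply, smul_eq_mul, hc p, hc' p]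
      have hp2 := p.isLt
      rcases Nat.mod_two_eq_zero_or_one (p:ℕ) with he | ho
      · rw [if_neg (by omega), if_pos he]
        have hwp : w (2*((p:ℕ)/2)) = v p := by
          simp only [hw, dif_pos (show 2*((p:ℕ)/2) < 2*m+1 by omega)]
          exact congrArg v (Fin.ext (show 2*((p:ℕ)/2) = (p:ℕ) by omega))
        have h4 := hf ((p:ℕ)/2) (by omega)
        rw [hwp] at h4
        rw [h4]; ring
      · rw [if_pos ho, if_neg (by omega)]
        have hwp : w (2*((p:ℕ)/2)+1) = v p := by
          simp only [hw, dif_pos (show 2*((p:ℕ)/2)+1 < 2*m+1 by omega)]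
          exact congrArg v (Fin.ext (show 2*((p:ℕ)/2)+1 = (p:ℕ) by omega))
        have h4 := hg ((p:ℕ)/2) (by omega)
        rw [hwp] at h4
        rw [h4]; ring
    · -- span ⊆ ker
      rw [Submodule.span_le]
      have memker : ∀ u : Fin (2*m+1) → MvPolynomial (Fin 2) k,
          (∀ i (hi : i < 2*m-1), X 0 * u ⟨i, by omega⟩ + X 1 * u ⟨i+2, by omega⟩ = 0) →
          u ∈ LinearMap.ker 𝔄.mulVecLin := by
        intro u hu
        rw [LinearMap.mem_ker, Matrix.mulVecLin_apply]
        funext i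
        have h2 := row hm 𝔄 h𝔄 u i.1 i.2
        rw [Fin.eta] at h2
        rw [h2]
        simpa using hu i.1 i.2
      rintro x (rfl | rfl)
      · apply memker
        intro i hi
        rcases Nat.mod_two_eq_zero_or_one i with he | ho
        · rw [ceval i (by omega), ceval (i+2) (by omega),
            if_neg (by omega), if_neg (by omega)]
          ring
        · obtain ⟨r, hr⟩ : ∃ r, m = i/2 + 2 + r := ⟨m - i/2 - 2, by omega⟩
          rw [ceval i (by omega), ceval (i+2) (by omega), if_pos ho, if_pos (by omega)]
          have d1 : (i+2)/2 = i/2+1 := by omega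
          rw [d1]
          have d2 : m-1-(i/2+1) = r := by omega
          have d3 : m-1-i/2 = r+1 := by omega
          rw [d2, d3, pow_succ, pow_succ]
          ring
      · apply memker
        intro i hi
        rcases Nat.mod_two_eq_zero_or_one i with he | ho
        · obtain ⟨r, hr⟩ : ∃ r, m = i/2 + 1 + r := ⟨m - i/2 - 1, by omega⟩
          rw [c'eval i (by omega), c'eval (i+2) (by omega), if_pos he, if_pos (by omega)]
          have d1 : (i+2)/2 = i/2+1 := by omega
          rw [d1]
          have d2 : m-(i/2+1) = r := by omega
          have d3 : m-i/2 = r+1 := by omega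
          rw [d2, d3, pow_succ, pow_succ]
          ring
        · rw [c'eval i (by omega), c'eval (i+2) (by omega),
            if_neg (by omega), if_neg (by omega)]
          ring
  · rw [LinearIndependent.pair_iff]
    intro s t hst
    have hX1 : (X (1:Fin 2) : MvPolynomial (Fin 2) k) ≠ 0 := X_ne_zero 1
    have h0 := congrFun hst (⟨0, by omega⟩ : Fin (2*m+1))
    have h1 := congrFun hst (⟨1, by omega⟩ : Fin (2*m+1))
    simp only [Pi.add_apply, Pi.smul_apply, smul_eq_mul, Pi.zero_apply,
      ceval 0 (by omega), c'eval 0 (by omega), ceval 1 (by omega), c'eval 1 (by omega)] at h0 h1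
    norm_num at h0 h1
    exact ⟨h1, h0⟩
end

section
/- Let S be a commutative ring, d ≥ 1, c_0, ..., c_d ∈ S, and for each positive integer n let Υ_n be the (d+n)×n matrix over S representing multiplication by g = Σ_{ℓ=0}^d c_ℓ x^ℓ y^{d-ℓ} from S[x,y]_{n-1} to S[x,y]_{n-1+d} with respect to the monomial bases y^{n-1}, x y^{n-2}, ..., x^{n-1} and y^{n-1+d}, ..., x^{n-1+d}; concretely, (Υ_n)_{i,j} = c_{i-j} (with c_m = 0 for m < 0 or m > d). Then the ideal I_n(Υ_n) of n×n minors of Υ_n equals the n-th power of the ideal (c_0, ..., c_d) of S. -/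
open Finset

-- rearrangement-based inequality
private lemma key_ineq {n : ℕ} (a : Fin n → ℤ) (ha : Monotone a) (σ : Equiv.Perm (Fin n))
    (hσ : σ ≠ 1) :
    (∑ i, (a i)^2) + 1 ≤ ∑ i : Fin n, (a (σ i) + ((σ i : ℕ) : ℤ) - ((i : ℕ) : ℤ))^2 := by
  have h1 : ∑ i : Fin n, a (σ i) * ((i : ℕ) : ℤ) ≤ ∑ i : Fin n, a i * ((i : ℕ) : ℤ) := by
    apply Monovary.sum_comp_perm_mul_le_sum_mul
    intro i j hij
    have hij2 : ((i : ℕ) : ℤ) < ((j : ℕ) : ℤ) := hij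
    exact ha (Fin.le_def.2 (Nat.cast_lt.mp hij2).le)
  have h2 : ∑ i : Fin n, a (σ i) * ((σ i : ℕ) : ℤ) = ∑ i : Fin n, a i * ((i : ℕ) : ℤ) :=
    Equiv.sum_comp σ (fun i => a i * ((i : ℕ) : ℤ))
  have h3 : ∑ i : Fin n, (a (σ i))^2 = ∑ i, (a i)^2 :=
    Equiv.sum_comp σ (fun i => (a i)^2)
  have h4 : (1 : ℤ) ≤ ∑ i : Fin n, (((σ i : ℕ) : ℤ) - ((i : ℕ) : ℤ))^2 := by
    obtain ⟨i, hi⟩ : ∃ i, σ i ≠ i := by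
      by_contra h; push_neg at h; exact hσ (Equiv.ext h)
    have : (1 : ℤ) ≤ (((σ i : ℕ) : ℤ) - ((i : ℕ) : ℤ))^2 := by
      have : ((σ i : ℕ) : ℤ) ≠ ((i : ℕ) : ℤ) := by
        simpa [Fin.val_injective.eq_iff, Fin.val_inj] using hi
      have h0 : ((σ i : ℕ) : ℤ) - ((i : ℕ) : ℤ) ≠ 0 := by omega
      rcases lt_or_gt_of_ne h0 with h | h <;> nlinarith
    calc (1:ℤ) ≤ _ := this
      _ ≤ _ := Finset.single_le_sum (f := fun i => (((σ i : ℕ) : ℤ) - ((i : ℕ) : ℤ))^2)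
          (fun j _ => sq_nonneg _) (mem_univ i)
  have expand : ∑ i : Fin n, (a (σ i) + ((σ i : ℕ) : ℤ) - ((i : ℕ) : ℤ))^2 =
      ∑ i : Fin n, (a (σ i))^2
      + 2 * (∑ i : Fin n, a (σ i) * ((σ i : ℕ) : ℤ) - ∑ i : Fin n, a (σ i) * ((i : ℕ) : ℤ))
      + ∑ i : Fin n, (((σ i : ℕ) : ℤ) - ((i : ℕ) : ℤ))^2 := by
    calc ∑ i : Fin n, (a (σ i) + ((σ i : ℕ) : ℤ) - ((i : ℕ) : ℤ))^2
        = ∑ i : Fin n, ((a (σ i))^2 + 2 * (a (σ i) * ((σ i : ℕ) : ℤ) - a (σ i) * ((i : ℕ) : ℤ))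
            + (((σ i : ℕ) : ℤ) - ((i : ℕ) : ℤ))^2) := Finset.sum_congr rfl (fun i _ => by ring)
      _ = _ := by
          rw [Finset.sum_add_distrib, Finset.sum_add_distrib, ← Finset.sum_sub_distrib,
            Finset.mul_sum]
  rw [expand, h3]
  omega

private lemma span_pow_le {S : Type*} [CommRing S] {m : ℕ} (c : Fin m → S) (I : Ideal S)
    (n : ℕ) (h : ∀ a : Fin n → Fin m, ∏ k, c (a k) ∈ I) :
    (Ideal.span (Set.range c)) ^ n ≤ I := by
  have main : ∀ N : ℕ, (Ideal.span (Set.range c)) ^ N ≤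
      Ideal.span {x : S | ∃ a : Fin N → Fin m, x = ∏ k, c (a k)} := by
    intro N
    induction N with
    | zero =>
        rw [pow_zero, Ideal.one_eq_top, top_le_iff, Ideal.eq_top_iff_one]
        exact Ideal.subset_span ⟨finZeroElim, by simp⟩
    | succ N ih =>
        rw [pow_succ']
        refine le_trans (Ideal.mul_mono le_rfl ih) (Ideal.mul_le.2 ?_)
        intro r hr s hs
        induction hr using Submodule.span_induction generalizing s with
        | mem x hx =>
            obtain ⟨i, rfl⟩ := hx
            induction hs using Submodule.span_induction with
            | mem y hy =>
                obtain ⟨a, rfl⟩ := hy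
                exact Ideal.subset_span ⟨Fin.cons i a, by simp [Fin.prod_univ_succ]⟩
            | zero => simp
            | add y z _ _ hy hz => rw [mul_add]; exact Ideal.add_mem _ hy hz
            | smul t y _ hy =>
                rw [smul_eq_mul, mul_left_comm]
                exact Ideal.mul_mem_left _ _ hy
        | zero => simp
        | add x y _ _ hx hy => rw [add_mul]; exact Ideal.add_mem _ (hx _ hs) (hy _ hs)
        | smul t x _ hx =>
            rw [smul_eq_mul, mul_assoc]
            exact Ideal.mul_mem_left _ _ (hx _ hs)
  refine le_trans (main n) (Ideal.span_le.2 ?_)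
  rintro x ⟨a, rfl⟩
  exact h a

private lemma mem_minors {S : Type*} [CommRing S] {d n : ℕ} (c : Fin (d + 1) → S)
    (Υ : Matrix (Fin (d + n)) (Fin n) S)
    (hΥ : ∀ i j, Υ i j =
      if h : (j : ℕ) ≤ (i : ℕ) ∧ (i : ℕ) - (j : ℕ) ≤ d
      then c ⟨(i : ℕ) - (j : ℕ), Nat.lt_succ_of_le h.2⟩ else 0) :
    ∀ (w : ℕ) (a : Fin n → Fin (d + 1)),
      n * (d * d) < (∑ k, (a k : ℕ) * (a k : ℕ)) + w →
      ∏ k, c (a k) ∈ Ideal.span {x : S | ∃ f : Fin n → Fin (d + n), Function.Injective f ∧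
        x = (Υ.submatrix f id).det} := by
  intro w
  induction w with
  | zero =>
      intro a ha
      exfalso
      have hle : ∑ k, (a k : ℕ) * (a k : ℕ) ≤ n * (d * d) := by
        calc ∑ k : Fin n, (a k : ℕ) * (a k : ℕ) ≤ ∑ _k : Fin n, d * d :=
              Finset.sum_le_sum (fun k _ =>
                Nat.mul_le_mul (Nat.lt_succ_iff.1 (a k).2) (Nat.lt_succ_iff.1 (a k).2))
          _ = n * (d * d) := by simp [Finset.sum_const, mul_comm]
      omega
  | succ w ih =>
      intro a ha
      set I := Ideal.span {x : S | ∃ f : Fin n → Fin (d + n), Function.Injective f ∧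
        x = (Υ.submatrix f id).det} with hI
      set τ := Tuple.sort a with hτ
      set b : Fin n → Fin (d + 1) := a ∘ τ with hb
      have hbmono : Monotone b := Tuple.monotone_sort a
      have hprod : ∏ k, c (b k) = ∏ k, c (a k) := Equiv.prod_comp τ (fun k => c (a k))
      have hsum : ∑ k, (b k : ℕ) * (b k : ℕ) = ∑ k, (a k : ℕ) * (a k : ℕ) :=
        Equiv.sum_comp τ (fun k => (a k : ℕ) * (a k : ℕ))
      rw [← hprod]
      have hbd : ∀ k : Fin n, (b k : ℕ) ≤ d := fun k => Nat.lt_succ_iff.1 (b k).2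
      set f : Fin n → Fin (d + n) := fun k => ⟨(b k : ℕ) + k, by have := hbd k; have := k.2; omega⟩
        with hf
      have hfinj : Function.Injective f := by
        have hsm : StrictMono f := by
          intro k l hkl
          have h1 : (b k : ℕ) ≤ b l := hbmono hkl.le
          have h2 : (k : ℕ) < l := hkl
          simp only [hf, Fin.mk_lt_mk]
          omega
        exact hsm.injective
      have hdet : (Υ.submatrix f id).det ∈ I := Ideal.subset_span ⟨f, hfinj, rfl⟩
      rw [Matrix.det_apply] at hdet
      have hid : (Equiv.Perm.sign (1 : Equiv.Perm (Fin n))) •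
          ∏ i : Fin n, (Υ.submatrix f id) ((1 : Equiv.Perm (Fin n)) i) i = ∏ i, c (b i) := by
        rw [Equiv.Perm.sign_one, one_smul]
        apply Finset.prod_congr rfl
        intro i _
        simp only [Equiv.Perm.one_apply, Matrix.submatrix_apply, id]
        rw [hΥ, dif_pos (by simp only [hf]; omega)]
        congr 1
        ext
        simp only [hf]
        omega
      have hsplit := Finset.add_sum_erase Finset.univ
        (fun σ : Equiv.Perm (Fin n) => Equiv.Perm.sign σ • ∏ i, (Υ.submatrix f id) (σ i) i)
        (Finset.mem_univ (1 : Equiv.Perm (Fin n)))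
      have hrest : ∑ σ ∈ Finset.univ.erase (1 : Equiv.Perm (Fin n)),
          Equiv.Perm.sign σ • ∏ i, (Υ.submatrix f id) (σ i) i ∈ I := by
        apply Ideal.sum_mem
        intro σ hσ
        have hσ1 : σ ≠ 1 := (Finset.mem_erase.1 hσ).1
        have hmem : ∏ i : Fin n, (Υ.submatrix f id) (σ i) i ∈ I := by
          by_cases hval : ∀ i : Fin n,
              (i : ℕ) ≤ (b (σ i) : ℕ) + (σ i : ℕ) ∧ (b (σ i) : ℕ) + (σ i : ℕ) - (i : ℕ) ≤ d
          · set B : Fin n → Fin (d + 1) := fun i =>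
              ⟨(b (σ i) : ℕ) + (σ i : ℕ) - (i : ℕ), by have := (hval i).2; omega⟩ with hB
            have hPB : ∏ i : Fin n, (Υ.submatrix f id) (σ i) i = ∏ i, c (B i) := by
              apply Finset.prod_congr rfl
              intro i _
              simp only [Matrix.submatrix_apply, id]
              rw [hΥ, dif_pos (by simp only [hf]; exact hval i)]
            rw [hPB]
            apply ih B
            -- weight inequality
            have hmono' : Monotone (fun i : Fin n => ((b i : ℕ) : ℤ)) := by
              intro i j hij
              exact Nat.cast_le.2 (Fin.le_def.1 (hbmono hij))
            have hZ := key_ineq (fun i : Fin n => ((b i : ℕ) : ℤ)) hmono' σ hσ1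
            have hcast : ∀ i : Fin n, ((B i : ℕ) : ℤ) =
                ((b (σ i) : ℕ) : ℤ) + ((σ i : ℕ) : ℤ) - ((i : ℕ) : ℤ) := by
              intro i
              have := (hval i).1
              simp only [hB]
              omega
            have hZ2 : (∑ i : Fin n, ((b i : ℕ) : ℤ) * ((b i : ℕ) : ℤ)) + 1 ≤
                ∑ i : Fin n, ((B i : ℕ) : ℤ) * ((B i : ℕ) : ℤ) := by
              have e1 : ∑ i : Fin n, ((B i : ℕ) : ℤ) * ((B i : ℕ) : ℤ) =
                  ∑ i : Fin n, (((b (σ i) : ℕ) : ℤ) + ((σ i : ℕ) : ℤ) - ((i : ℕ) : ℤ)) ^ 2 :=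
                Finset.sum_congr rfl (fun i _ => by rw [hcast i]; ring)
              rw [e1]
              calc (∑ i : Fin n, ((b i : ℕ) : ℤ) * ((b i : ℕ) : ℤ)) + 1
                  = (∑ i : Fin n, ((b i : ℕ) : ℤ) ^ 2) + 1 :=
                    by rw [Finset.sum_congr rfl (fun i _ => by ring :
                      ∀ i ∈ Finset.univ, ((b i : ℕ) : ℤ) * ((b i : ℕ) : ℤ) = ((b i : ℕ) : ℤ) ^ 2)]
                _ ≤ _ := hZ
            have hN : (∑ k, (b k : ℕ) * (b k : ℕ)) + 1 ≤ ∑ k, (B k : ℕ) * (B k : ℕ) := by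
              exact_mod_cast (by push_cast at hZ2 ⊢; exact hZ2 :
                ((∑ k, (b k : ℕ) * (b k : ℕ) : ℕ) : ℤ) + 1 ≤ ((∑ k, (B k : ℕ) * (B k : ℕ) : ℕ) : ℤ))
            omega
          · push_neg at hval
            obtain ⟨i, hi⟩ := hval
            rw [Finset.prod_eq_zero (Finset.mem_univ i)]
            · exact Ideal.zero_mem I
            · simp only [Matrix.submatrix_apply, id]
              rw [hΥ, dif_neg (by simp only [hf]; exact fun h => not_le_of_gt (hi h.1) h.2)]
        rcases Int.units_eq_one_or (Equiv.Perm.sign σ) with h | h <;> rw [h]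
        · simpa using hmem
        · simpa using I.neg_mem hmem
      rw [← hsplit] at hdet
      beta_reduce at hdet
      have hA := Ideal.sub_mem I hdet hrest
      rw [add_sub_cancel_right] at hA
      rwa [hid] at hA

/-- The ideal of maximal (`n × n`) minors of the `(d+n) × n` "multiplication by
`g = ∑ c_ℓ x^ℓ y^{d-ℓ}`" Toeplitz matrix `Υ_n` (with `(Υ_n)_{i,j} = c_{i-j}`)
equals the `n`-th power of the ideal generated by `c₀, …, c_d`. -/
theorem stmt9 (S : Type*) [CommRing S] (d : ℕ) (hd : 1 ≤ d) (c : Fin (d + 1) → S)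
    (n : ℕ) (hn : 1 ≤ n)
    (Υ : Matrix (Fin (d + n)) (Fin n) S)
    (hΥ : ∀ i j, Υ i j =
      if h : (j : ℕ) ≤ (i : ℕ) ∧ (i : ℕ) - (j : ℕ) ≤ d
      then c ⟨(i : ℕ) - (j : ℕ), by omega⟩ else 0) :
    Ideal.span {x : S | ∃ f : Fin n → Fin (d + n), Function.Injective f ∧
        x = (Υ.submatrix f id).det} =
      (Ideal.span (Set.range c)) ^ n := by
  apply le_antisymm
  · rw [Ideal.span_le]
    rintro x ⟨f, hf, rfl⟩
    rw [SetLike.mem_coe, Matrix.det_apply]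
    apply Ideal.sum_mem
    intro σ _
    have hprod : ∏ i, (Υ.submatrix f id) (σ i) i ∈ (Ideal.span (Set.range c)) ^ n := by
      have hpow : (Ideal.span (Set.range c)) ^ n =
          ∏ _i : Fin n, (Ideal.span (Set.range c)) := by
        rw [Finset.prod_const, Finset.card_univ, Fintype.card_fin]
      rw [hpow]
      apply Ideal.prod_mem_prod
      intro i _
      rw [Matrix.submatrix_apply, hΥ]
      split
      · exact Ideal.subset_span (Set.mem_range_self _)
      · exact Ideal.zero_mem _
    rcases Int.units_eq_one_or (Equiv.Perm.sign σ) with h | h <;> rw [h]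
    · simpa using hprod
    · simpa using neg_mem hprod
  · apply span_pow_le
    intro a
    apply mem_minors c Υ hΥ (n * (d * d) + 1)
    set m := n * (d * d)
    omega
end

section
/- Let k be a field, U = k[T1,T2], k ≥ 2 an integer. Let A_{k+1} denote the (k-1)×(k+1) matrix over U whose i-th row has T1 in column i, T2 in column i+1, T1 in column i+2, and zeros elsewhere, and let B_k be A_{k+1} with its last column removed (a (k-1)×k matrix). Let m_1, ..., m_k be the signed maximal minors of B_k, i.e., m_i = (-1)^{i+1} times the determinant of B_k with column i removed. Then for ℓ = 2k, the ℓ-dimensional column vector C_1 = (m_1, ..., m_{k-1}, m_k, 0, -m_k, ..., -m_2)^T satisfies A_ℓ · C_1 = 0, where A_ℓ is the (ℓ-2)×ℓ tridiagonal Toeplitz matrix with row pattern (T1, T2, T1). -/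
open MvPolynomial

private lemma sum3_aux {R : Type*} [CommRing R] {n : ℕ} (f : Fin n → R) (a b c : Fin n)
    (hab : a ≠ b) (hac : a ≠ c) (hbc : b ≠ c)
    (h0 : ∀ j, j ≠ a → j ≠ b → j ≠ c → f j = 0) :
    ∑ j, f j = f a + f b + f c := by
  have h : ∑ j, f j = ∑ j ∈ ({a, b, c} : Finset (Fin n)), f j := by
    refine (Finset.sum_subset (Finset.subset_univ _) ?_).symm
    intro j _ hj
    simp only [Finset.mem_insert, Finset.mem_singleton, not_or] at hj
    exact h0 j hj.1 hj.2.1 hj.2.2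
  rw [h, Finset.sum_insert (by simp [hab, hac]), Finset.sum_insert (by simp [hbc]),
    Finset.sum_singleton, add_assoc]

private lemma sum2_aux {R : Type*} [CommRing R] {n : ℕ} (f : Fin n → R) (a b : Fin n)
    (hab : a ≠ b)
    (h0 : ∀ j, j ≠ a → j ≠ b → f j = 0) :
    ∑ j, f j = f a + f b := by
  have h : ∑ j, f j = ∑ j ∈ ({a, b} : Finset (Fin n)), f j := by
    refine (Finset.sum_subset (Finset.subset_univ _) ?_).symm
    intro j _ hj
    simp only [Finset.mem_insert, Finset.mem_singleton, not_or] at hj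
    exact h0 j hj.1 hj.2
  rw [h, Finset.sum_insert (by simp [hab]), Finset.sum_singleton]

/-- Lemma 5.7(1), first column: for `ℓ = 2K` with `K = κ + 2 ≥ 2`, the vector
`C₁ = (m₁, …, m_K, 0, -m_K, …, -m₂)ᵀ` built from the signed maximal minors
`m_i = (-1)^{i+1} det(B_K with column i removed)` of `B_K` (the tridiagonal Toeplitz
matrix `A_{K+1}` with its last column removed) is a syzygy of the `(ℓ-2) × ℓ`
tridiagonal Toeplitz matrix `A_ℓ` with row pattern `(T₁, T₂, T₁)`.
Here `T₁ = X 0`, `T₂ = X 1`. -/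
theorem stmt11 (k : Type*) [Field k] (κ : ℕ)
    (B : Matrix (Fin (κ + 1)) (Fin (κ + 2)) (MvPolynomial (Fin 2) k))
    (hB : ∀ i j, B i j = if (j : ℕ) = (i : ℕ) then X 0
      else if (j : ℕ) = (i : ℕ) + 1 then X 1
      else if (j : ℕ) = (i : ℕ) + 2 then X 0 else 0)
    (m : Fin (κ + 2) → MvPolynomial (Fin 2) k)
    (hm : ∀ i, m i = (-1) ^ (i : ℕ) * (B.submatrix id i.succAbove).det)
    (A : Matrix (Fin (2 * κ + 2)) (Fin (2 * κ + 4)) (MvPolynomial (Fin 2) k))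
    (hA : ∀ i j, A i j = if (j : ℕ) = (i : ℕ) then X 0
      else if (j : ℕ) = (i : ℕ) + 1 then X 1
      else if (j : ℕ) = (i : ℕ) + 2 then X 0 else 0)
    (C1 : Fin (2 * κ + 4) → MvPolynomial (Fin 2) k)
    (hC1 : ∀ p, C1 p =
      if h : (p : ℕ) < κ + 2 then m ⟨(p : ℕ), h⟩
      else if h2 : (p : ℕ) = κ + 2 then 0
      else -(m ⟨2 * κ + 4 - (p : ℕ), by have := p.isLt; omega⟩)) :
    A.mulVec C1 = 0 := by
  -- The fundamental syzygy: each row of `B` is orthogonal to the vector of signed minors.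
  have hrow : ∀ r : Fin (κ + 1), ∑ j, B r j * m j = 0 := by
    intro r
    have h0 : (Matrix.of (Fin.cons (B r) B) :
        Matrix (Fin (κ + 2)) (Fin (κ + 2)) (MvPolynomial (Fin 2) k)).det = 0 := by
      refine Matrix.det_zero_of_row_eq (i := 0) (j := r.succ) (Fin.succ_ne_zero r).symm ?_
      funext l
      simp [Fin.cons_zero, Fin.cons_succ]
      rfl
    rw [Matrix.det_succ_row_zero] at h0
    rw [← h0]
    refine Finset.sum_congr rfl fun j _ => ?_
    have hsub : (Matrix.of (Fin.cons (B r) B) :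
        Matrix (Fin (κ + 2)) (Fin (κ + 2)) (MvPolynomial (Fin 2) k)).submatrix Fin.succ
          j.succAbove = B.submatrix id j.succAbove := by
      ext i l
      simp [Matrix.submatrix_apply, Fin.cons_succ]
      rfl
    rw [hsub, hm]
    simp only [Matrix.of_apply, Fin.cons_zero]
    rw [show (Fin.cons (B r) B : Fin (κ + 2) → Fin (κ + 2) → MvPolynomial (Fin 2) k) 0 j = B r j from rfl]
    ring
  -- Entry computation for `B`.
  have hBe : ∀ (a : Fin (κ + 1)) (b : Fin (κ + 2)),
      ((b : ℕ) = (a : ℕ) → B a b = X 0) ∧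
      ((b : ℕ) = (a : ℕ) + 1 → B a b = X 1) ∧
      ((b : ℕ) = (a : ℕ) + 2 → B a b = X 0) ∧
      ((b : ℕ) ≠ (a : ℕ) → (b : ℕ) ≠ (a : ℕ) + 1 → (b : ℕ) ≠ (a : ℕ) + 2 → B a b = 0) := by
    intro a b
    rw [hB]
    refine ⟨fun h => ?_, fun h => ?_, fun h => ?_, fun h1 h2 h3 => ?_⟩ <;>
      split_ifs <;> first | rfl | omega
  -- The minors indexed by natural numbers (0 outside the range).
  set m' : ℕ → MvPolynomial (Fin 2) k := fun t => if h : t < κ + 2 then m ⟨t, h⟩ else 0 with hm'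
  have hmval : ∀ (t : ℕ) (h : t < κ + 2), m' t = m ⟨t, h⟩ := by
    intro t h; simp only [hm', dif_pos h]
  have key2 : ∀ r : ℕ, r + 2 ≤ κ + 1 →
      X 0 * m' r + X 1 * m' (r + 1) + X 0 * m' (r + 2) = 0 := by
    intro r hr
    have h := hrow ⟨r, by omega⟩
    rw [sum3_aux _ (⟨r, by omega⟩ : Fin (κ + 2)) ⟨r + 1, by omega⟩ ⟨r + 2, by omega⟩
      (by simp only [ne_eq, Fin.mk.injEq]; omega)
      (by simp only [ne_eq, Fin.mk.injEq]; omega)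
      (by simp only [ne_eq, Fin.mk.injEq]; omega)
      (by
        intro j hj1 hj2 hj3
        simp only [ne_eq, Fin.ext_iff, Fin.val_mk] at hj1 hj2 hj3
        rw [(hBe _ j).2.2.2 hj1 hj2 hj3, zero_mul])] at h
    rw [(hBe _ _).1 rfl, (hBe _ _).2.1 rfl, (hBe _ _).2.2.1 rfl] at h
    rw [hmval r (by omega), hmval (r + 1) (by omega), hmval (r + 2) (by omega)]
    linear_combination h
  have key3 : X 0 * m' κ + X 1 * m' (κ + 1) = 0 := by
    have h := hrow ⟨κ, by omega⟩
    rw [sum2_aux _ (⟨κ, by omega⟩ : Fin (κ + 2)) ⟨κ + 1, by omega⟩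
      (by simp only [ne_eq, Fin.mk.injEq]; omega)
      (by
        intro j hj1 hj2
        simp only [ne_eq, Fin.ext_iff, Fin.val_mk] at hj1 hj2
        rw [(hBe _ j).2.2.2 hj1 hj2 (by simp only [Fin.val_mk]; have := j.isLt; omega), zero_mul])] at h
    rw [(hBe _ _).1 rfl, (hBe _ _).2.1 rfl] at h
    rw [hmval κ (by omega), hmval (κ + 1) (by omega)]
    linear_combination h
  -- Entry computation for `A`.
  have hAe : ∀ (a : Fin (2 * κ + 2)) (b : Fin (2 * κ + 4)),
      ((b : ℕ) = (a : ℕ) → A a b = X 0) ∧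
      ((b : ℕ) = (a : ℕ) + 1 → A a b = X 1) ∧
      ((b : ℕ) = (a : ℕ) + 2 → A a b = X 0) ∧
      ((b : ℕ) ≠ (a : ℕ) → (b : ℕ) ≠ (a : ℕ) + 1 → (b : ℕ) ≠ (a : ℕ) + 2 → A a b = 0) := by
    intro a b
    rw [hA]
    refine ⟨fun h => ?_, fun h => ?_, fun h => ?_, fun h1 h2 h3 => ?_⟩ <;>
      split_ifs <;> first | rfl | omega
  -- C1 in terms of m'.
  have hC1' : ∀ p : Fin (2 * κ + 4), C1 p =
      if (p : ℕ) < κ + 2 then m' p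
      else if (p : ℕ) = κ + 2 then 0 else -(m' (2 * κ + 4 - (p : ℕ))) := by
    intro p
    rw [hC1]
    by_cases h1 : (p : ℕ) < κ + 2
    · rw [dif_pos h1, if_pos h1, hmval _ h1]
    · rw [dif_neg h1, if_neg h1]
      by_cases h2 : (p : ℕ) = κ + 2
      · rw [dif_pos h2, if_pos h2]
      · rw [dif_neg h2, if_neg h2, hmval _ (by have := p.isLt; omega)]
  -- Main computation.
  funext i
  show ∑ j, A i j * C1 j = 0
  have hlt : (i : ℕ) < 2 * κ + 2 := i.isLt
  rw [sum3_aux _ (⟨(i : ℕ), by omega⟩ : Fin (2 * κ + 4)) ⟨(i : ℕ) + 1, by omega⟩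
    ⟨(i : ℕ) + 2, by omega⟩
    (by simp only [ne_eq, Fin.mk.injEq]; omega)
    (by simp only [ne_eq, Fin.mk.injEq]; omega)
    (by simp only [ne_eq, Fin.mk.injEq]; omega)
    (by
      intro j hj1 hj2 hj3
      simp only [ne_eq, Fin.ext_iff, Fin.val_mk] at hj1 hj2 hj3
      rw [(hAe i j).2.2.2 hj1 hj2 hj3, zero_mul])]
  rw [(hAe _ _).1 rfl, (hAe _ _).2.1 rfl, (hAe _ _).2.2.1 rfl]
  rw [hC1', hC1', hC1']
  simp only [Fin.val_mk]
  by_cases h1 : (i : ℕ) + 2 ≤ κ + 1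
  · rw [if_pos (by omega), if_pos (by omega), if_pos (by omega)]
    exact key2 _ h1
  · by_cases h2 : (i : ℕ) = κ
    · rw [h2]
      rw [if_pos (by omega), if_pos (by omega), if_neg (by omega), if_pos (by omega)]
      linear_combination key3
    · by_cases h3 : (i : ℕ) = κ + 1
      · rw [h3]
        rw [if_pos (by omega), if_neg (by omega), if_pos (by omega),
          if_neg (by omega), if_neg (by omega)]
        have he : 2 * κ + 4 - (κ + 1 + 2) = κ + 1 := by omega
        rw [he]
        ring
      · by_cases h4 : (i : ℕ) = κ + 2
        · rw [h4]
          rw [if_neg (by omega), if_pos (by omega), if_neg (by omega), if_neg (by omega),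
            if_neg (by omega), if_neg (by omega)]
          have he1 : 2 * κ + 4 - (κ + 2 + 1) = κ + 1 := by omega
          have he2 : 2 * κ + 4 - (κ + 2 + 2) = κ := by omega
          rw [he1, he2]
          linear_combination -key3
        · -- (i : ℕ) ≥ κ + 3
          have hge : κ + 3 ≤ (i : ℕ) := by omega
          rw [if_neg (by omega), if_neg (by omega), if_neg (by omega), if_neg (by omega),
            if_neg (by omega), if_neg (by omega)]
          have he0 : 2 * κ + 4 - (i : ℕ) = (2 * κ + 2 - (i : ℕ)) + 2 := by omega
          have he1 : 2 * κ + 4 - ((i : ℕ) + 1) = (2 * κ + 2 - (i : ℕ)) + 1 := by omega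
          have he2 : 2 * κ + 4 - ((i : ℕ) + 2) = 2 * κ + 2 - (i : ℕ) := by omega
          rw [he0, he1, he2]
          linear_combination -key2 (2 * κ + 2 - (i : ℕ)) (by omega)
end

section
/- Let k be a field of characteristic different from 2 in which every element has a square root. Let f1, f2 ∈ k[x,y] be homogeneous forms of degree 2 forming a regular sequence (equivalently, having no common linear factor). Then there exists a k-linear change of variables in x, y after which the k-span of f1 and f2 inside k[x,y]_2 equals either the span of {x² + y², xy} or the span of {y², x²}. -/
open MvPolynomial Pointwise

namespace Stmt13Aux

variable {k : Type*} [Field k]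

noncomputable def subv (M : Matrix (Fin 2) (Fin 2) k) : Fin 2 → MvPolynomial (Fin 2) k :=
  fun i => ∑ j, C (M i j) * X j

lemma subv_apply (M : Matrix (Fin 2) (Fin 2) k) (i : Fin 2) :
    subv M i = C (M i 0) * X 0 + C (M i 1) * X 1 := by
  simp [subv, Fin.sum_univ_two]

lemma aeval_subv_comp (M N : Matrix (Fin 2) (Fin 2) k) (p : MvPolynomial (Fin 2) k) :
    aeval (subv M) (aeval (subv N) p) = aeval (subv (N * M)) p := by
  have : ((aeval (subv M)).comp (aeval (subv N)) :
      MvPolynomial (Fin 2) k →ₐ[k] MvPolynomial (Fin 2) k) = aeval (subv (N * M)) := by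
    apply MvPolynomial.algHom_ext
    intro i
    simp [subv_apply, aeval_X, Matrix.mul_apply, Fin.sum_univ_two, C_mul]
    ring
  simpa using congrArg (fun (f : MvPolynomial (Fin 2) k →ₐ[k] MvPolynomial (Fin 2) k) => f p) this

lemma aeval_subv_one (p : MvPolynomial (Fin 2) k) :
    aeval (subv (1 : Matrix (Fin 2) (Fin 2) k)) p = p := by
  have : (aeval (subv (1 : Matrix (Fin 2) (Fin 2) k)) :
      MvPolynomial (Fin 2) k →ₐ[k] MvPolynomial (Fin 2) k) = AlgHom.id k _ := by
    apply MvPolynomial.algHom_ext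
    intro i
    fin_cases i <;> simp [subv_apply, Matrix.one_apply]
  simpa using congrArg (fun (f : MvPolynomial (Fin 2) k →ₐ[k] MvPolynomial (Fin 2) k) => f p) this

lemma subv_homog (M : Matrix (Fin 2) (Fin 2) k) {p : MvPolynomial (Fin 2) k} {n : ℕ}
    (hp : p.IsHomogeneous n) : (aeval (subv M) p).IsHomogeneous n := by
  have := hp.aeval (n := 1) (subv M) (fun i => ?_)
  · simpa using this
  · rw [subv_apply]
    apply MvPolynomial.IsHomogeneous.add
    · simpa using (isHomogeneous_X k (0 : Fin 2)).C_mul (M i 0)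
    · simpa using (isHomogeneous_X k (1 : Fin 2)).C_mul (M i 1)

lemma finsupp2_eq (m : Fin 2 →₀ ℕ) : m = Finsupp.single 0 (m 0) + Finsupp.single 1 (m 1) := by
  ext i; fin_cases i <;> simp

lemma degree2 (m : Fin 2 →₀ ℕ) : m.degree = m 0 + m 1 := by
  rw [Finsupp.degree_apply,
    Finset.sum_subset (Finset.subset_univ m.support)
      (fun i _ hi => Finsupp.notMem_support_iff.mp hi), Fin.sum_univ_two]

lemma rep2 {p : MvPolynomial (Fin 2) k} (hp : p.IsHomogeneous 2) :
    ∃ a b c : k, p = C a * X 0 ^ 2 + C b * (X 0 * X 1) + C c * X 1 ^ 2 := by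
  refine ⟨coeff (Finsupp.single 0 2) p, coeff (Finsupp.single 0 1 + Finsupp.single 1 1) p,
    coeff (Finsupp.single 1 2) p, ?_⟩
  apply MvPolynomial.ext
  intro m
  have hX00 : (X 0 ^ 2 : MvPolynomial (Fin 2) k) = monomial (Finsupp.single 0 2) 1 := by
    rw [X_pow_eq_monomial]
  have hX01 : (X 0 * X 1 : MvPolynomial (Fin 2) k)
      = monomial (Finsupp.single 0 1 + Finsupp.single 1 1) 1 := by
    rw [X, X, monomial_mul, one_mul]
  have hX11 : (X 1 ^ 2 : MvPolynomial (Fin 2) k) = monomial (Finsupp.single 1 2) 1 := by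
    rw [X_pow_eq_monomial]
  rw [coeff_add, coeff_add, hX00, hX01, hX11, coeff_C_mul, coeff_C_mul, coeff_C_mul,
    coeff_monomial, coeff_monomial, coeff_monomial]
  have hm := finsupp2_eq m
  by_cases hd : m 0 + m 1 = 2
  · have h0 : m 0 = 2 ∧ m 1 = 0 ∨ m 0 = 1 ∧ m 1 = 1 ∨ m 0 = 0 ∧ m 1 = 2 := by omega
    rcases h0 with ⟨h0, h1⟩ | ⟨h0, h1⟩ | ⟨h0, h1⟩ <;> rw [h0, h1] at hm
    · have hm' : m = Finsupp.single 0 2 := by rw [hm]; simp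
      subst hm'
      rw [if_pos rfl, if_neg, if_neg] <;>
        first
        | simp
        | · intro h
            have := DFunLike.congr_fun h (0 : Fin 2)
            simp at this
    · have hm' : m = Finsupp.single 0 1 + Finsupp.single 1 1 := hm
      subst hm'
      rw [if_pos rfl, if_neg, if_neg] <;>
        first
        | simp
        | · intro h
            have := DFunLike.congr_fun h (0 : Fin 2)
            simp at this
    · have hm' : m = Finsupp.single 1 2 := by rw [hm]; simp
      subst hm'
      rw [if_pos rfl, if_neg, if_neg] <;>
        first
        | simp
        | · intro h
            have := DFunLike.congr_fun h (0 : Fin 2)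
            simp at this
  · have hc : coeff m p = 0 := hp.coeff_eq_zero (by rw [degree2]; exact hd)
    rw [hc, if_neg, if_neg, if_neg]
    · ring
    all_goals
      intro h
      apply hd
      have h0 := DFunLike.congr_fun h (0 : Fin 2)
      have h1 := DFunLike.congr_fun h (1 : Fin 2)
      simp at h0 h1
      omega

/-- The goal predicate. -/
def Goal (f1 f2 : MvPolynomial (Fin 2) k) : Prop :=
  ∃ M : Matrix (Fin 2) (Fin 2) k, IsUnit M.det ∧
    (Submodule.span k ({aeval (subv M) f1, aeval (subv M) f2} : Set (MvPolynomial (Fin 2) k)) =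
        Submodule.span k ({X 0 ^ 2 + X 1 ^ 2, X 0 * X 1} : Set (MvPolynomial (Fin 2) k)) ∨
     Submodule.span k ({aeval (subv M) f1, aeval (subv M) f2} : Set (MvPolynomial (Fin 2) k)) =
        Submodule.span k ({X 1 ^ 2, X 0 ^ 2} : Set (MvPolynomial (Fin 2) k)))

lemma Goal.comp {f1 f2 : MvPolynomial (Fin 2) k} (N : Matrix (Fin 2) (Fin 2) k)
    (hN : IsUnit N.det) (h : Goal (aeval (subv N) f1) (aeval (subv N) f2)) : Goal f1 f2 := by
  obtain ⟨M, hM, h⟩ := h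
  refine ⟨N * M, by rw [Matrix.det_mul]; exact hN.mul hM, ?_⟩
  rwa [aeval_subv_comp, aeval_subv_comp] at h

lemma transport_ne {f1 f2 : MvPolynomial (Fin 2) k} (N : Matrix (Fin 2) (Fin 2) k)
    (hN : IsUnit N.det) (hne : ∀ d : k, f2 ≠ C d * f1) (d : k) :
    aeval (subv N) f2 ≠ C d * aeval (subv N) f1 := by
  intro h
  apply hne d
  have := congrArg (aeval (subv N⁻¹)) h
  rwa [aeval_subv_comp, Matrix.mul_nonsing_inv _ hN, aeval_subv_one, map_mul, aeval_C,
    aeval_subv_comp, Matrix.mul_nonsing_inv _ hN, aeval_subv_one] at this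

lemma transport_cf {f1 f2 : MvPolynomial (Fin 2) k} (N : Matrix (Fin 2) (Fin 2) k)
    (hN : IsUnit N.det)
    (hcf : ∀ l : MvPolynomial (Fin 2) k, l.IsHomogeneous 1 → l ≠ 0 → l ∣ f1 → l ∣ f2 → False)
    (l : MvPolynomial (Fin 2) k) (hl1 : l.IsHomogeneous 1) (hl0 : l ≠ 0)
    (hd1 : l ∣ aeval (subv N) f1) (hd2 : l ∣ aeval (subv N) f2) : False := by
  have hinv : ∀ p : MvPolynomial (Fin 2) k, aeval (subv N) (aeval (subv N⁻¹) p) = p := fun p => by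
    rw [aeval_subv_comp, Matrix.nonsing_inv_mul _ hN, aeval_subv_one]
  have hinv' : ∀ p : MvPolynomial (Fin 2) k, aeval (subv N⁻¹) (aeval (subv N) p) = p := fun p => by
    rw [aeval_subv_comp, Matrix.mul_nonsing_inv _ hN, aeval_subv_one]
  refine hcf (aeval (subv N⁻¹) l) (subv_homog _ hl1) ?_ ?_ ?_
  · intro h
    apply hl0
    have := congrArg (aeval (subv N)) h
    rwa [hinv, map_zero] at this
  · obtain ⟨u, hu⟩ := hd1
    exact ⟨aeval (subv N⁻¹) u, by
      have := congrArg (aeval (subv N⁻¹)) hu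
      rwa [hinv', map_mul] at this⟩
  · obtain ⟨u, hu⟩ := hd2
    exact ⟨aeval (subv N⁻¹) u, by
      have := congrArg (aeval (subv N⁻¹)) hu
      rwa [hinv', map_mul] at this⟩

lemma span_pair_eq {u v w z : MvPolynomial (Fin 2) k}
    (h1 : u ∈ Submodule.span k ({w, z} : Set (MvPolynomial (Fin 2) k)))
    (h2 : v ∈ Submodule.span k ({w, z} : Set (MvPolynomial (Fin 2) k)))
    (h3 : w ∈ Submodule.span k ({u, v} : Set (MvPolynomial (Fin 2) k)))
    (h4 : z ∈ Submodule.span k ({u, v} : Set (MvPolynomial (Fin 2) k))) :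
    Submodule.span k ({u, v} : Set (MvPolynomial (Fin 2) k)) =
      Submodule.span k ({w, z} : Set (MvPolynomial (Fin 2) k)) := by
  apply le_antisymm <;> rw [Submodule.span_le] <;> rintro x (rfl | rfl) <;> assumption

/-- Case where `f1 = e · x y`. -/
lemma case_xy (hchar : (2:k) ≠ 0) (hsq : ∀ a : k, ∃ b : k, b ^ 2 = a)
    {e : k} (he : e ≠ 0) {f1 f2 : MvPolynomial (Fin 2) k}
    (hf1 : f1 = C e * (X 0 * X 1)) (h2 : f2.IsHomogeneous 2)
    (hcf : ∀ l : MvPolynomial (Fin 2) k, l.IsHomogeneous 1 → l ≠ 0 → l ∣ f1 → l ∣ f2 → False) :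
    Goal f1 f2 := by
  obtain ⟨a, b, c, hrep⟩ := rep2 h2
  have ha : a ≠ 0 := by
    rintro rfl
    refine hcf (X 1) (isHomogeneous_X _ _) (X_ne_zero _)
      ⟨C e * X 0, by rw [hf1]; ring⟩ ⟨C b * X 0 + C c * X 1, by rw [hrep]; simp; ring⟩
  have hc : c ≠ 0 := by
    rintro rfl
    refine hcf (X 0) (isHomogeneous_X _ _) (X_ne_zero _)
      ⟨C e * X 1, by rw [hf1]; ring⟩ ⟨C a * X 0 + C b * X 1, by rw [hrep]; simp; ring⟩
  obtain ⟨s, hs⟩ := hsq a⁻¹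
  obtain ⟨t, ht⟩ := hsq c⁻¹
  have hs0 : s ≠ 0 := by
    rintro rfl; rw [zero_pow (by norm_num)] at hs
    exact ha (by rw [← inv_inv a, ← hs, inv_zero])
  have ht0 : t ≠ 0 := by
    rintro rfl; rw [zero_pow (by norm_num)] at ht
    exact hc (by rw [← inv_inv c, ← ht, inv_zero])
  have has : a * s ^ 2 = 1 := by rw [hs, mul_inv_cancel₀ ha]
  have hct : c * t ^ 2 = 1 := by rw [ht, mul_inv_cancel₀ hc]
  refine ⟨Matrix.of ![![s, 0], ![0, t]], ?_, Or.inl ?_⟩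
  · rw [Matrix.det_fin_two]
    simp
    exact ⟨fun h => absurd h hs0, fun h => absurd h ht0⟩
  · have hsub0 : subv (Matrix.of ![![s, 0], ![0, t]]) 0 = C s * X 0 := by
      rw [subv_apply]; simp
    have hsub1 : subv (Matrix.of ![![s, 0], ![0, t]]) 1 = C t * X 1 := by
      rw [subv_apply]; simp
    have hg1 : aeval (subv (Matrix.of ![![s, 0], ![0, t]])) f1
        = (e * s * t) • (X 0 * X 1) := by
      rw [hf1, map_mul, map_mul, aeval_C, aeval_X, aeval_X, hsub0, hsub1, smul_eq_C_mul,
        map_mul, map_mul, algebraMap_eq]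
      ring
    have hg2 : aeval (subv (Matrix.of ![![s, 0], ![0, t]])) f2
        = (X 0 ^ 2 + X 1 ^ 2) + (b * s * t) • (X 0 * X 1) := by
      rw [hrep]
      simp only [map_add, map_mul, map_pow, aeval_C, aeval_X, hsub0, hsub1, smul_eq_C_mul,
        algebraMap_eq]
      have hcas := congrArg (C (σ := Fin 2)) has
      have hcct := congrArg (C (σ := Fin 2)) hct
      simp only [map_mul, map_pow, map_one] at hcas hcct
      linear_combination (X 0 ^ 2 : MvPolynomial (Fin 2) k) * hcas +
        (X 1 ^ 2 : MvPolynomial (Fin 2) k) * hcct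
    rw [hg1, hg2]
    have hest : e * s * t ≠ 0 := by
      exact mul_ne_zero (mul_ne_zero he hs0) ht0
    have hxy : (X 0 * X 1 : MvPolynomial (Fin 2) k) ∈
        Submodule.span k ({(e * s * t) • (X 0 * X 1),
          (X 0 ^ 2 + X 1 ^ 2) + (b * s * t) • (X 0 * X 1)} : Set (MvPolynomial (Fin 2) k)) := by
      have hm : (e * s * t) • (X 0 * X 1 : MvPolynomial (Fin 2) k) ∈
          Submodule.span k ({(e * s * t) • (X 0 * X 1),
            (X 0 ^ 2 + X 1 ^ 2) + (b * s * t) • (X 0 * X 1)} : Set (MvPolynomial (Fin 2) k)) :=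
        Submodule.subset_span (by left; rfl)
      have := Submodule.smul_mem _ (e * s * t)⁻¹ hm
      rwa [smul_smul, inv_mul_cancel₀ hest, one_smul] at this
    apply span_pair_eq
    · exact Submodule.smul_mem _ _ (Submodule.subset_span (by right; rfl))
    · exact Submodule.add_mem _ (Submodule.subset_span (by left; rfl))
        (Submodule.smul_mem _ _ (Submodule.subset_span (by right; rfl)))
    · have hv : ((X 0 ^ 2 + X 1 ^ 2) + (b * s * t) • (X 0 * X 1) : MvPolynomial (Fin 2) k) ∈
          Submodule.span k ({(e * s * t) • (X 0 * X 1),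
            (X 0 ^ 2 + X 1 ^ 2) + (b * s * t) • (X 0 * X 1)} : Set (MvPolynomial (Fin 2) k)) :=
        Submodule.subset_span (by right; rfl)
      have := Submodule.sub_mem _ hv (Submodule.smul_mem _ (b * s * t) hxy)
      simpa using this
    · exact hxy

/-- Case where `f1 = e · x²`. -/
lemma case_sq (hchar : (2:k) ≠ 0)
    {e : k} (he : e ≠ 0) {f1 f2 : MvPolynomial (Fin 2) k}
    (hf1 : f1 = C e * X 0 ^ 2) (h2 : f2.IsHomogeneous 2)
    (hne : ∀ d : k, f2 ≠ C d * f1)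
    (hcf : ∀ l : MvPolynomial (Fin 2) k, l.IsHomogeneous 1 → l ≠ 0 → l ∣ f1 → l ∣ f2 → False) :
    Goal f1 f2 := by
  obtain ⟨a, b, c, hrep⟩ := rep2 h2
  have hc : c ≠ 0 := by
    rintro rfl
    by_cases hb : b = 0
    · subst hb
      refine hne (a * e⁻¹) ?_
      rw [hrep, hf1]
      have hae : a * e⁻¹ * e = a := by field_simp
      simp only [map_zero, zero_mul, add_zero]
      rw [← mul_assoc, ← C_mul, hae]
    · refine hcf (X 0) (isHomogeneous_X _ _) (X_ne_zero _)
        ⟨C e * X 0, by rw [hf1]; ring⟩ ⟨C a * X 0 + C b * X 1, by rw [hrep]; simp; ring⟩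
  set β := b / (2 * c) with hβ
  have hb : b = 2 * c * β := by
    rw [hβ]; field_simp
  refine ⟨Matrix.of ![![1, 0], ![-β, 1]], ?_, Or.inr ?_⟩
  · rw [Matrix.det_fin_two]; simp
  · have hsub0 : subv (Matrix.of ![![1, 0], ![-β, 1]]) 0 = X 0 := by
      rw [subv_apply]; simp
    have hsub1 : subv (Matrix.of ![![1, 0], ![-β, 1]]) 1 = C (-β) * X 0 + X 1 := by
      rw [subv_apply]; simp
    have hg1 : aeval (subv (Matrix.of ![![1, 0], ![-β, 1]])) f1 = e • (X 0 ^ 2) := by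
      rw [hf1, map_mul, map_pow, aeval_C, aeval_X, hsub0, smul_eq_C_mul, algebraMap_eq]
    have hg2 : aeval (subv (Matrix.of ![![1, 0], ![-β, 1]])) f2
        = (a - c * β ^ 2) • (X 0 ^ 2) + c • (X 1 ^ 2) := by
      rw [hrep]
      simp only [map_add, map_mul, map_pow, aeval_C, aeval_X, hsub0, hsub1, smul_eq_C_mul,
        algebraMap_eq]
      have hcb := congrArg (C (σ := Fin 2)) hb
      simp only [map_mul, map_ofNat, map_sub, map_pow, map_neg] at hcb ⊢
      linear_combination (X 0 * X 1 - X 0 ^ 2 * C β : MvPolynomial (Fin 2) k) * hcb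
    rw [hg1, hg2]
    have hX0 : (X 0 ^ 2 : MvPolynomial (Fin 2) k) ∈
        Submodule.span k ({e • (X 0 ^ 2 : MvPolynomial (Fin 2) k),
          (a - c * β ^ 2) • (X 0 ^ 2) + c • (X 1 ^ 2)} : Set (MvPolynomial (Fin 2) k)) := by
      have hm := Submodule.subset_span (R := k) (M := MvPolynomial (Fin 2) k)
        (s := {e • (X 0 ^ 2 : MvPolynomial (Fin 2) k),
          (a - c * β ^ 2) • (X 0 ^ 2) + c • (X 1 ^ 2)}) (by left; rfl)
      have := Submodule.smul_mem _ e⁻¹ hm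
      rwa [smul_smul, inv_mul_cancel₀ he, one_smul] at this
    have hX1 : (X 1 ^ 2 : MvPolynomial (Fin 2) k) ∈
        Submodule.span k ({e • (X 0 ^ 2 : MvPolynomial (Fin 2) k),
          (a - c * β ^ 2) • (X 0 ^ 2) + c • (X 1 ^ 2)} : Set (MvPolynomial (Fin 2) k)) := by
      have hv := Submodule.subset_span (R := k) (M := MvPolynomial (Fin 2) k)
        (s := {e • (X 0 ^ 2 : MvPolynomial (Fin 2) k),
          (a - c * β ^ 2) • (X 0 ^ 2) + c • (X 1 ^ 2)}) (by right; rfl)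
      have h' := Submodule.sub_mem _ hv (Submodule.smul_mem _ (a - c * β ^ 2) hX0)
      have h'' : ((a - c * β ^ 2) • (X 0 ^ 2) + c • (X 1 ^ 2)
          - (a - c * β ^ 2) • (X 0 ^ 2) : MvPolynomial (Fin 2) k) = c • (X 1 ^ 2) := by ring_nf
      rw [h''] at h'
      have := Submodule.smul_mem _ c⁻¹ h'
      rwa [smul_smul, inv_mul_cancel₀ hc, one_smul] at this
    apply span_pair_eq
    · exact Submodule.smul_mem _ _ (Submodule.subset_span (by right; rfl))
    · exact Submodule.add_mem _ (Submodule.smul_mem _ _ (Submodule.subset_span (by right; rfl)))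
        (Submodule.smul_mem _ _ (Submodule.subset_span (by left; rfl)))
    · exact hX1
    · exact hX0

-- moved to end

lemma constCoeff_zero_of_homog {p : MvPolynomial (Fin 2) k} {n : ℕ} (hn : n ≠ 0)
    (hp : p.IsHomogeneous n) : constantCoeff p = 0 := by
  rw [constantCoeff_eq]
  exact hp.coeff_eq_zero (by simp [degree2]; omega)

theorem main (hchar : (2 : k) ≠ 0)
    (hsq : ∀ a : k, ∃ b : k, b ^ 2 = a)
    (f1 f2 : MvPolynomial (Fin 2) k)
    (h1 : f1.IsHomogeneous 2) (h2 : f2.IsHomogeneous 2)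
    (hreg : RingTheory.Sequence.IsRegular (MvPolynomial (Fin 2) k) [f1, f2]) :
    Goal f1 f2 := by
  -- extract regularity consequences
  have hw := hreg.toIsWeaklyRegular
  rw [RingTheory.Sequence.isWeaklyRegular_cons_iff] at hw
  obtain ⟨hr1, hw2⟩ := hw
  rw [RingTheory.Sequence.isWeaklyRegular_cons_iff] at hw2
  obtain ⟨hr2, -⟩ := hw2
  have hmem : ∀ x : MvPolynomial (Fin 2) k,
      x ∈ f1 • (⊤ : Submodule (MvPolynomial (Fin 2) k) (MvPolynomial (Fin 2) k)) ↔
      x ∈ Ideal.span {f1} := by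
    intro x
    rw [← Submodule.ideal_span_singleton_smul, smul_eq_mul, Ideal.mul_top]
  have hf1ne : f1 ≠ 0 := by
    rintro rfl
    have := @hr1 1 0 (by simp)
    simp at this
  have hmul : ∀ g, f2 * g ∈ Ideal.span {f1} → g ∈ Ideal.span {f1} := by
    intro g hg
    have h0 : f2 • (Submodule.Quotient.mk g : QuotSMulTop f1 (MvPolynomial (Fin 2) k)) =
        f2 • (Submodule.Quotient.mk 0 : QuotSMulTop f1 (MvPolynomial (Fin 2) k)) := by
      rw [← Submodule.Quotient.mk_smul, ← Submodule.Quotient.mk_smul]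
      rw [Submodule.Quotient.eq]
      simpa [smul_eq_mul, hmem] using hg
    have := hr2 h0
    rw [Submodule.Quotient.eq] at this
    simpa [smul_eq_mul, hmem] using this
  have hne : ∀ d : k, f2 ≠ C d * f1 := by
    intro d h
    have h1' : f2 * 1 ∈ Ideal.span {f1} := by
      rw [mul_one]
      exact Ideal.mem_span_singleton.mpr ⟨C d, by rw [h]; ring⟩
    obtain ⟨q, hq⟩ := Ideal.mem_span_singleton.mp (hmul 1 h1')
    have := congrArg constantCoeff hq
    rw [map_one, map_mul, constCoeff_zero_of_homog (by norm_num) h1, zero_mul] at this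
    exact one_ne_zero this
  have hcf : ∀ l : MvPolynomial (Fin 2) k,
      l.IsHomogeneous 1 → l ≠ 0 → l ∣ f1 → l ∣ f2 → False := by
    rintro l hl1 hl0 ⟨u, hu⟩ ⟨v, hv⟩
    have h1' : f2 * u ∈ Ideal.span {f1} :=
      Ideal.mem_span_singleton.mpr ⟨v, by rw [hv, hu]; ring⟩
    obtain ⟨q, hq⟩ := Ideal.mem_span_singleton.mp (hmul u h1')
    have heq : f1 * 1 = f1 * (l * q) := by
      nth_rewrite 1 [hu]
      rw [hq, hu]; ring
    have h1q : (1 : MvPolynomial (Fin 2) k) = l * q := mul_left_cancel₀ hf1ne heq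
    have := congrArg constantCoeff h1q
    rw [map_one, map_mul, constCoeff_zero_of_homog (by norm_num) hl1, zero_mul] at this
    exact one_ne_zero this
  -- representation of f1
  obtain ⟨a, b, c, hrep⟩ := rep2 h1
  by_cases ha : a = 0
  · subst ha
    by_cases hb : b = 0
    · -- f1 = c y², use the swap
      subst hb
      have hc : c ≠ 0 := by
        rintro rfl; apply hf1ne; rw [hrep]; simp
      have hf1' : f1 = C c * X 1 ^ 2 := by rw [hrep]; simp
      set N : Matrix (Fin 2) (Fin 2) k := Matrix.of ![![0, 1], ![1, 0]] with hN
      have hdet : IsUnit N.det := by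
        rw [hN, Matrix.det_fin_two]; simp
      refine Goal.comp N hdet ?_
      have hg1 : aeval (subv N) f1 = C c * X 0 ^ 2 := by
        rw [hf1', map_mul, map_pow, aeval_C, aeval_X, subv_apply, algebraMap_eq, hN]
        simp
      exact case_sq hchar hc hg1 (subv_homog _ h2) (transport_ne N hdet hne)
        (transport_cf N hdet hcf)
    · -- f1 = (b x + c y) y
      have hf1' : f1 = (C b * X 0 + C c * X 1) * X 1 := by rw [hrep]; simp; ring
      set N : Matrix (Fin 2) (Fin 2) k := Matrix.of ![![b⁻¹, -(c/b)], ![0, 1]] with hN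
      have hdet : IsUnit N.det := by
        rw [hN, Matrix.det_fin_two]
        simp [isUnit_iff_ne_zero, hb]
      refine Goal.comp N hdet ?_
      have hlA : C b * subv N 0 + C c * subv N 1 = X 0 := by
        rw [subv_apply, subv_apply, hN]
        simp only [Matrix.of_apply, Matrix.cons_val', Matrix.cons_val_zero, Matrix.cons_val_one,
          Matrix.head_cons, Matrix.empty_val', Matrix.cons_val_fin_one, Matrix.head_fin_const,
          map_zero, map_one]
        have e1 : b * b⁻¹ = 1 := mul_inv_cancel₀ hb
        have e2 : b * -(c/b) + c = 0 := by field_simp; ring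
        have ce1 := congrArg (C (σ := Fin 2)) e1
        have ce2 := congrArg (C (σ := Fin 2)) e2
        simp only [map_mul, map_add, map_one, map_zero] at ce1 ce2
        linear_combination (X 0 : MvPolynomial (Fin 2) k) * ce1 +
          (X 1 : MvPolynomial (Fin 2) k) * ce2
      have hlB : subv N 1 = X 1 := by
        rw [subv_apply, hN]
        simp
      have hg1 : aeval (subv N) f1 = C 1 * (X 0 * X 1) := by
        rw [hf1', map_mul, map_add, map_mul, map_mul, aeval_C, aeval_C, aeval_X, aeval_X,
          algebraMap_eq, hlA, hlB, C_1, one_mul]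
      exact case_xy hchar hsq one_ne_zero hg1 (subv_homog _ h2) (transport_cf N hdet hcf)
  · -- a ≠ 0
    obtain ⟨s, hs⟩ := hsq (b ^ 2 - 4 * a * c)
    by_cases hs0 : s = 0
    · -- double root: f1 = a (x + r y)²
      subst hs0
      have hb2 : b ^ 2 = 4 * a * c := by
        rw [zero_pow (by norm_num)] at hs
        linear_combination -hs
      set r : k := b / (2 * a) with hr
      have hfact : f1 = C a * (X 0 + C r * X 1) ^ 2 := by
        rw [hrep]
        have e1 : a * (2 * r) = b := by rw [hr]; field_simp
        have e2 : a * r ^ 2 = c := by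
          rw [hr]; field_simp
          linear_combination hb2
        have ce1 := congrArg (C (σ := Fin 2)) e1
        have ce2 := congrArg (C (σ := Fin 2)) e2
        simp only [map_mul, map_ofNat, map_pow] at ce1 ce2
        linear_combination (-(X 0 * X 1) : MvPolynomial (Fin 2) k) * ce1 +
          (-(X 1 ^ 2) : MvPolynomial (Fin 2) k) * ce2
      set N : Matrix (Fin 2) (Fin 2) k := Matrix.of ![![1, -r], ![0, 1]] with hN
      have hdet : IsUnit N.det := by
        rw [hN, Matrix.det_fin_two]; simp
      refine Goal.comp N hdet ?_
      have hl : subv N 0 + C r * subv N 1 = X 0 := by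
        rw [subv_apply, subv_apply, hN]
        simp only [Matrix.of_apply, Matrix.cons_val', Matrix.cons_val_zero, Matrix.cons_val_one,
          Matrix.head_cons, Matrix.empty_val', Matrix.cons_val_fin_one, Matrix.head_fin_const,
          map_zero, map_one, map_neg]
        ring
      have hg1 : aeval (subv N) f1 = C a * X 0 ^ 2 := by
        rw [hfact, map_mul, map_pow, map_add, map_mul, aeval_C, aeval_C, aeval_X, aeval_X,
          algebraMap_eq, hl]
      exact case_sq hchar ha hg1 (subv_homog _ h2) (transport_ne N hdet hne)
        (transport_cf N hdet hcf)
    · -- two distinct roots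
      set r1 : k := (-b + s) / (2 * a) with hr1
      set r2 : k := (-b - s) / (2 * a) with hr2
      have hfact : f1 = C a * ((X 0 - C r1 * X 1) * (X 0 - C r2 * X 1)) := by
        rw [hrep]
        have e1 : a * (r1 + r2) = -b := by rw [hr1, hr2]; field_simp; ring
        have e2 : a * (r1 * r2) = c := by
          rw [hr1, hr2]; field_simp
          linear_combination (-1 : k) * hs
        have ce1 := congrArg (C (σ := Fin 2)) e1
        have ce2 := congrArg (C (σ := Fin 2)) e2
        simp only [map_mul, map_add, map_neg] at ce1 ce2
        linear_combination (X 0 * X 1 : MvPolynomial (Fin 2) k) * ce1 +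
          (-(X 1 ^ 2) : MvPolynomial (Fin 2) k) * ce2
      have hd : r1 - r2 ≠ 0 := by
        intro h
        apply hs0
        have hra : s = a * (r1 - r2) := by rw [hr1, hr2]; field_simp; ring
        rw [h, mul_zero] at hra; exact hra
      set d : k := r1 - r2 with hdd
      set N : Matrix (Fin 2) (Fin 2) k :=
        Matrix.of ![![-r2/d, r1/d], ![-1/d, 1/d]] with hN
      have hdet : IsUnit N.det := by
        rw [hN, Matrix.det_fin_two]
        simp only [Matrix.of_apply, Matrix.cons_val', Matrix.cons_val_zero, Matrix.cons_val_one,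
          Matrix.head_cons, Matrix.empty_val', Matrix.cons_val_fin_one, Matrix.head_fin_const]
        rw [isUnit_iff_ne_zero]
        have : -r2/d * (1/d) - r1/d * (-1/d) = d⁻¹ := by
          field_simp; rw [hdd]; ring
        rw [this]
        exact inv_ne_zero hd
      refine Goal.comp N hdet ?_
      have e00 : -r2/d - r1 * (-1/d) = 1 := by field_simp; rw [hdd]; try ring
      have e01 : r1/d - r1 * (1/d) = 0 := by field_simp; try ring
      have e10 : -r2/d - r2 * (-1/d) = 0 := by field_simp; try ring
      have e11 : r1/d - r2 * (1/d) = 1 := by field_simp; rw [hdd]; try ring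
      have ce00 := congrArg (C (σ := Fin 2)) e00
      have ce01 := congrArg (C (σ := Fin 2)) e01
      have ce10 := congrArg (C (σ := Fin 2)) e10
      have ce11 := congrArg (C (σ := Fin 2)) e11
      simp only [map_sub, map_mul, map_one, map_zero] at ce00 ce01 ce10 ce11
      have hl1 : subv N 0 - C r1 * subv N 1 = X 0 := by
        rw [subv_apply, subv_apply, hN]
        simp only [Matrix.of_apply, Matrix.cons_val', Matrix.cons_val_zero, Matrix.cons_val_one,
          Matrix.head_cons, Matrix.empty_val', Matrix.cons_val_fin_one, Matrix.head_fin_const]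
        linear_combination (X 0 : MvPolynomial (Fin 2) k) * ce00 +
          (X 1 : MvPolynomial (Fin 2) k) * ce01
      have hl2 : subv N 0 - C r2 * subv N 1 = X 1 := by
        rw [subv_apply, subv_apply, hN]
        simp only [Matrix.of_apply, Matrix.cons_val', Matrix.cons_val_zero, Matrix.cons_val_one,
          Matrix.head_cons, Matrix.empty_val', Matrix.cons_val_fin_one, Matrix.head_fin_const]
        linear_combination (X 0 : MvPolynomial (Fin 2) k) * ce10 +
          (X 1 : MvPolynomial (Fin 2) k) * ce11
      have hg1 : aeval (subv N) f1 = C a * (X 0 * X 1) := by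
        rw [hfact, map_mul, map_mul, map_sub, map_sub, map_mul, map_mul, aeval_C, aeval_C,
          aeval_C, aeval_X, aeval_X]
        rw [algebraMap_eq]
        rw [hl1, hl2]
      exact case_xy hchar hsq ha hg1 (subv_homog _ h2) (transport_cf N hdet hcf)

end Stmt13Aux

/-- Over a field `k` of characteristic ≠ 2 closed under square roots, any regular
sequence of two binary quadratic forms can be brought, by a linear change of
variables, into a normal form whose span is that of `{x² + y², xy}` or `{y², x²}`.
Here `x = X 0`, `y = X 1`. -/
theorem stmt13 (k : Type*) [Field k] (hchar : (2 : k) ≠ 0)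
    (hsq : ∀ a : k, ∃ b : k, b ^ 2 = a)
    (f1 f2 : MvPolynomial (Fin 2) k)
    (h1 : f1.IsHomogeneous 2) (h2 : f2.IsHomogeneous 2)
    (hreg : RingTheory.Sequence.IsRegular (MvPolynomial (Fin 2) k) [f1, f2]) :
    ∃ M : Matrix (Fin 2) (Fin 2) k, IsUnit M.det ∧
      (Submodule.span k
          ({aeval (fun i => ∑ j, C (M i j) * X j) f1,
            aeval (fun i => ∑ j, C (M i j) * X j) f2} : Set (MvPolynomial (Fin 2) k)) =
        Submodule.span k ({X 0 ^ 2 + X 1 ^ 2, X 0 * X 1} : Set (MvPolynomial (Fin 2) k)) ∨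
       Submodule.span k
          ({aeval (fun i => ∑ j, C (M i j) * X j) f1,
            aeval (fun i => ∑ j, C (M i j) * X j) f2} : Set (MvPolynomial (Fin 2) k)) =
        Submodule.span k ({X 1 ^ 2, X 0 ^ 2} : Set (MvPolynomial (Fin 2) k))) := by
  obtain ⟨M, hM, h⟩ := Stmt13Aux.main hchar hsq f1 f2 h1 h2 hreg
  exact ⟨M, hM, h⟩
end

section
/- Let k be a field, R = k[x,y], d ≥ 1, and let f1, f2 ∈ R be a regular sequence of homogeneous forms of degree d. For an integer n ≥ 0 let χ : R(-d)^{n+2} → R^{n+1} be the graded R-module map given by the (n+1)×(n+2) Toeplitz matrix whose i-th row has f1 in column i, f2 in column i+1, and zeros elsewhere. Then the cokernel of χ vanishes in all degrees ≥ (n+2)d - 1; that is, the induced k-linear map χ_e : (R_{e-d})^{n+2} → (R_e)^{n+1} is surjective for every e ≥ (n+2)d - 1. -/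
open MvPolynomial

section
open Finset Module

namespace Stmt15Aux
variable {k : Type*} [Field k]



noncomputable def expo (m a : ℕ) : Fin 2 →₀ ℕ := Finsupp.single 0 a + Finsupp.single 1 (m - a)

lemma degree_fin2 (d : Fin 2 →₀ ℕ) : d.degree = d 0 + d 1 := by
  rw [Finsupp.degree_apply, Finset.sum_subset (Finset.subset_univ d.support)]
  · exact Fin.sum_univ_two d
  · intro i _ hi
    simpa using Finsupp.notMem_support_iff.mp hi

lemma expo_apply0 (m a : ℕ) : expo m a 0 = a := by simp [expo]
lemma expo_apply1 (m a : ℕ) : expo m a 1 = m - a := by simp [expo]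

lemma expo_degree (m a : ℕ) (ha : a ≤ m) : (expo m a).degree = m := by
  rw [degree_fin2, expo_apply0, expo_apply1]; omega

lemma expo_inj (m : ℕ) {a b : ℕ} (h : expo m a = expo m b) : a = b := by
  have := congrArg (fun f => f 0) h
  simpa [expo_apply0] using this

lemma eq_expo_of_degree (d : Fin 2 →₀ ℕ) (m : ℕ) (hd : d.degree = m) :
    d = expo m (d 0) := by
  have h2 : d 0 + d 1 = m := by rw [← degree_fin2, hd]
  ext i
  match i with
  | 0 => simp [expo_apply0]
  | 1 => rw [expo_apply1]; omega

noncomputable def mono (m : ℕ) (a : Fin (m + 1)) : homogeneousSubmodule (Fin 2) k m :=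
  ⟨monomial (expo m a) 1, by
    rw [mem_homogeneousSubmodule]
    exact isHomogeneous_monomial 1 (expo_degree m a (Nat.lt_succ_iff.mp a.2))⟩

lemma mono_li (m : ℕ) : LinearIndependent k (mono (k := k) m) := by
  have hli : LinearIndependent k fun a : Fin (m+1) =>
      ((mono (k := k) m a : MvPolynomial (Fin 2) k)) := by
    have h := (MvPolynomial.basisMonomials (Fin 2) k).linearIndependent
    have hinj : Function.Injective (fun a : Fin (m+1) => expo m (a : ℕ)) :=
      fun a b h => Fin.ext (expo_inj m h)
    have := h.comp _ hinj
    exact this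
  exact hli.of_comp (homogeneousSubmodule (Fin 2) k m).subtype

lemma homog_eq_sum (m : ℕ) (p : MvPolynomial (Fin 2) k) (hp : p.IsHomogeneous m) :
    p = ∑ a : Fin (m+1), coeff (expo m (a : ℕ)) p • (monomial (expo m (a : ℕ)) (1:k)) := by
  apply MvPolynomial.ext
  intro d
  rw [coeff_sum]
  by_cases hd : d.degree = m
  · have hd0 : d 0 ≤ m := by
      have := degree_fin2 d; omega
    have hde : d = expo m (d 0) := eq_expo_of_degree d m hd
    rw [Finset.sum_eq_single (⟨d 0, Nat.lt_succ_of_le hd0⟩ : Fin (m+1))]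
    · simp [coeff_smul, coeff_monomial, ← hde]
    · intro b _ hb
      have : expo m (b : ℕ) ≠ d := by
        intro h
        apply hb
        apply Fin.ext
        exact expo_inj m (h.trans hde)
      simp [coeff_smul, coeff_monomial, this]
    · simp
  · have h1 : coeff d p = 0 := hp.coeff_eq_zero hd
    have h2 : ∀ a : Fin (m+1), coeff d ((coeff (expo m (a:ℕ)) p) • (monomial (expo m (a:ℕ)) (1:k))) = 0 := by
      intro a
      have : expo m (a : ℕ) ≠ d := by
        intro h
        exact hd (h ▸ expo_degree m a (Nat.lt_succ_iff.mp a.2))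
      simp [coeff_smul, coeff_monomial, this]
    rw [Finset.sum_congr rfl fun a _ => h2 a]
    simp [h1]

noncomputable def monoBasis (m : ℕ) :
    Basis (Fin (m+1)) k (homogeneousSubmodule (Fin 2) k m) :=
  Basis.mk (mono_li m) (by
    rintro ⟨p, hp⟩ -
    have hps := homog_eq_sum m p ((mem_homogeneousSubmodule _ _).mp hp)
    have hsub : (⟨p, hp⟩ : homogeneousSubmodule (Fin 2) k m)
        = ∑ a : Fin (m+1), coeff (expo m (a:ℕ)) p • mono m a := by
      apply Subtype.ext
      rw [Submodule.coe_sum]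
      simpa [mono] using hps
    rw [hsub]
    exact Submodule.sum_mem _ fun a _ =>
      Submodule.smul_mem _ _ (Submodule.subset_span ⟨a, rfl⟩))

instance homogFD (m : ℕ) : FiniteDimensional k (homogeneousSubmodule (Fin 2) k m) :=
  Module.Finite.of_basis (monoBasis (k := k) m)

lemma finrank_homog (m : ℕ) :
    Module.finrank k (homogeneousSubmodule (Fin 2) k m) = m + 1 := by
  rw [Module.finrank_eq_card_basis (monoBasis (k := k) m), Fintype.card_fin]





lemma hc_mul_aux {D : ℕ} {h : MvPolynomial (Fin 2) k} (hh : h.IsHomogeneous D)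
    (g : MvPolynomial (Fin 2) k) (N : ℕ) :
    homogeneousComponent N (h * g) =
      ∑ i ∈ range (g.totalDegree + 1),
        if N = D + i then h * homogeneousComponent i g else 0 := by
  conv_lhs => rw [← sum_homogeneousComponent g, Finset.mul_sum, map_sum]
  refine Finset.sum_congr rfl fun i _ => ?_
  have hmem : h * homogeneousComponent i g ∈ homogeneousSubmodule (Fin 2) k (D + i) :=
    (mem_homogeneousSubmodule _ _).mpr (hh.mul (homogeneousComponent_isHomogeneous i g))
  exact homogeneousComponent_of_mem hmem

lemma hc_mul_of_le {D N : ℕ} {h : MvPolynomial (Fin 2) k} (hh : h.IsHomogeneous D)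
    (g : MvPolynomial (Fin 2) k) (hDN : D ≤ N) :
    homogeneousComponent N (h * g) = h * homogeneousComponent (N - D) g := by
  rw [hc_mul_aux hh g N]
  have : ∀ i ∈ range (g.totalDegree + 1),
      (if N = D + i then h * homogeneousComponent i g else 0)
        = (if N - D = i then h * homogeneousComponent i g else 0) := by
    intro i _
    congr 1
    simp only [eq_iff_iff]
    omega
  rw [Finset.sum_congr rfl this, Finset.sum_ite_eq]
  by_cases hmem : N - D ∈ range (g.totalDegree + 1)
  · rw [if_pos hmem]
  · rw [if_neg hmem]
    rw [homogeneousComponent_eq_zero]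
    · ring
    · simp only [mem_range] at hmem; omega

lemma hc_mul_of_lt {D N : ℕ} {h : MvPolynomial (Fin 2) k} (hh : h.IsHomogeneous D)
    (g : MvPolynomial (Fin 2) k) (hND : N < D) :
    homogeneousComponent N (h * g) = 0 := by
  rw [hc_mul_aux hh g N]
  apply Finset.sum_eq_zero
  intro i _
  rw [if_neg (by omega)]



variable {f1 f2 : MvPolynomial (Fin 2) k}

lemma ofList_take1 :
    (Ideal.ofList ([f1, f2].take 1) • ⊤ : Submodule (MvPolynomial (Fin 2) k) (MvPolynomial (Fin 2) k))
      = Ideal.span {f1} := by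
  simp [Ideal.ofList_cons, Ideal.ofList_nil, smul_eq_mul, Ideal.mul_top]

lemma f1_ne_zero (hreg : RingTheory.Sequence.IsRegular (MvPolynomial (Fin 2) k) [f1, f2]) :
    f1 ≠ 0 := by
  intro h
  have h0 := hreg.toIsWeaklyRegular.regular_mod_prev 0 (by simp)
  simp only [List.take_zero, List.getElem_cons_zero] at h0
  rw [h] at h0
  have hsub : Subsingleton ((MvPolynomial (Fin 2) k) ⧸
      (Ideal.ofList ([] : List (MvPolynomial (Fin 2) k)) • ⊤ :
        Submodule (MvPolynomial (Fin 2) k) (MvPolynomial (Fin 2) k))) := by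
    constructor
    intro x y
    exact h0 (show (0:MvPolynomial (Fin 2) k) • x = 0 • y by rw [zero_smul]; exact (zero_smul _ y).symm)
  rw [Submodule.Quotient.subsingleton_iff] at hsub
  have : (1 : MvPolynomial (Fin 2) k) ∈ (Ideal.ofList ([] : List (MvPolynomial (Fin 2) k)) • ⊤ :
      Submodule (MvPolynomial (Fin 2) k) (MvPolynomial (Fin 2) k)) := by
    rw [hsub]; trivial
  rw [Ideal.ofList_nil] at this
  simp [smul_eq_mul] at this

lemma div_prop (hreg : RingTheory.Sequence.IsRegular (MvPolynomial (Fin 2) k) [f1, f2]) :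
    ∀ b, f1 ∣ f2 * b → f1 ∣ b := by
  intro b hb
  have h1 := hreg.toIsWeaklyRegular.regular_mod_prev 1 (by simp)
  rw [show ([f1,f2][1] = f2) from rfl] at h1
  rw [ofList_take1] at h1
  have hmk : (Submodule.Quotient.mk b :
      (MvPolynomial (Fin 2) k) ⧸ (Ideal.span {f1} : Ideal (MvPolynomial (Fin 2) k))) = 0 := by
    apply h1
    show f2 • _ = f2 • _
    rw [smul_zero, ← Submodule.Quotient.mk_smul, smul_eq_mul]
    rw [Submodule.Quotient.mk_eq_zero]
    exact Ideal.mem_span_singleton.mpr hb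
  rw [Submodule.Quotient.mk_eq_zero] at hmk
  exact Ideal.mem_span_singleton.mp hmk

lemma relprime (hreg : RingTheory.Sequence.IsRegular (MvPolynomial (Fin 2) k) [f1, f2]) :
    IsRelPrime f1 f2 := by
  intro c hc1 hc2
  obtain ⟨a, ha⟩ := hc1
  obtain ⟨s, hs⟩ := hc2
  have hdvd : f1 ∣ f2 * a := ⟨s, by rw [ha, hs]; ring⟩
  obtain ⟨t, ht⟩ := div_prop hreg a hdvd
  have hf1 := f1_ne_zero hreg
  have : f1 * 1 = f1 * (c * t) := by
    conv_lhs => rw [mul_one, ha, ht]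
    ring
  exact IsUnit.of_mul_eq_one t (mul_left_cancel₀ hf1 this).symm

lemma f1_not_unit (hreg : RingTheory.Sequence.IsRegular (MvPolynomial (Fin 2) k) [f1, f2]) :
    ¬ IsUnit f1 := by
  intro hu
  apply hreg.top_ne_smul
  have hsp : Ideal.ofList [f1, f2] = ⊤ := by
    rw [eq_top_iff, ← Ideal.span_singleton_eq_top.mpr hu, Ideal.ofList_cons]
    exact le_sup_left
  rw [hsp, smul_eq_mul, Ideal.top_mul]

lemma f2_ne_zero (hreg : RingTheory.Sequence.IsRegular (MvPolynomial (Fin 2) k) [f1, f2]) :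
    f2 ≠ 0 := by
  intro h
  exact f1_not_unit hreg (relprime hreg dvd_rfl (h ▸ dvd_zero f1))





noncomputable def chiMap (f1 f2 : MvPolynomial (Fin 2) k) {d M e : ℕ}
    (h1 : f1.IsHomogeneous d) (h2 : f2.IsHomogeneous d) (n : ℕ) (hMe : e = d + M) :
    (Fin (n+2) → homogeneousSubmodule (Fin 2) k M) →ₗ[k]
      (Fin (n+1) → homogeneousSubmodule (Fin 2) k e) where
  toFun w i := ⟨f1 * (w i.castSucc : MvPolynomial (Fin 2) k) + f2 * (w i.succ :
      MvPolynomial (Fin 2) k), by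
    refine Submodule.add_mem _ ?_ ?_ <;> rw [mem_homogeneousSubmodule, hMe]
    · exact h1.mul ((mem_homogeneousSubmodule _ _).mp (w i.castSucc).2)
    · exact h2.mul ((mem_homogeneousSubmodule _ _).mp (w i.succ).2)⟩
  map_add' w w' := by
    funext i
    apply Subtype.ext
    simp only [Pi.add_apply, Submodule.coe_add]
    ring
  map_smul' c w := by
    funext i
    apply Subtype.ext
    simp only [Pi.smul_apply, SetLike.val_smul, RingHom.id_apply]
    rw [smul_add, mul_smul_comm, mul_smul_comm]

lemma mem_ker_chiMap_iff {f1 f2 : MvPolynomial (Fin 2) k} {d M e : ℕ}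
    {h1 : f1.IsHomogeneous d} {h2 : f2.IsHomogeneous d} {n : ℕ} {hMe : e = d + M}
    (w : Fin (n+2) → homogeneousSubmodule (Fin 2) k M) :
    w ∈ LinearMap.ker (chiMap f1 f2 h1 h2 n hMe) ↔
      ∀ i : Fin (n+1), f1 * (w i.castSucc : MvPolynomial (Fin 2) k) + f2 * (w i.succ :
        MvPolynomial (Fin 2) k) = 0 := by
  rw [LinearMap.mem_ker, funext_iff]
  constructor
  · intro h i
    have := congrArg (Subtype.val) (h i)
    simpa [chiMap] using this
  · intro h i
    apply Subtype.ext
    simpa [chiMap] using h i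





section Chain
variable {f1 f2 : MvPolynomial (Fin 2) k} {M n : ℕ}
  (w : Fin (n+2) → homogeneousSubmodule (Fin 2) k M)
  (hw : ∀ i : Fin (n+1), f1 * (w i.castSucc : MvPolynomial (Fin 2) k)
      + f2 * (w i.succ : MvPolynomial (Fin 2) k) = 0)

include hw in
lemma chain1 : ∀ i : Fin (n+2), f2 ^ (i : ℕ) * (w i : MvPolynomial (Fin 2) k)
    = f1 ^ (i : ℕ) * ((-1 : MvPolynomial (Fin 2) k) ^ (i : ℕ) * (w 0 : MvPolynomial (Fin 2) k)) := by
  intro i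
  induction i using Fin.induction with
  | zero => simp
  | succ i ih =>
    have hstep : f2 * (w i.succ : MvPolynomial (Fin 2) k)
        = -(f1 * (w i.castSucc : MvPolynomial (Fin 2) k)) := by
      linear_combination hw i
    simp only [Fin.val_succ, Fin.coe_castSucc] at ih ⊢
    rw [pow_succ, pow_succ, pow_succ]
    linear_combination f2 ^ (i : ℕ) * hstep - f1 * ih

include hw in
lemma chain2 (h0 : (w 0 : MvPolynomial (Fin 2) k) = 0) (hf2 : f2 ≠ 0) :
    ∀ i : Fin (n+2), (w i : MvPolynomial (Fin 2) k) = 0 := by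
  intro i
  induction i using Fin.induction with
  | zero => exact h0
  | succ i ih =>
    have := hw i
    rw [ih, mul_zero, zero_add] at this
    rcases mul_eq_zero.mp this with h | h
    · exact absurd h hf2
    · exact h

include hw in
lemma chain_dvd (hrel : IsRelPrime f2 f1) : f2 ^ (n+1) ∣ (w 0 : MvPolynomial (Fin 2) k) := by
  have h := chain1 w hw (Fin.last (n+1))
  rw [Fin.val_last] at h
  have hdvd : f2 ^ (n+1) ∣ f1 ^ (n+1) *
      ((-1 : MvPolynomial (Fin 2) k) ^ (n+1) * (w 0 : MvPolynomial (Fin 2) k)) :=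
    ⟨(w (Fin.last (n+1)) : MvPolynomial (Fin 2) k), h.symm⟩
  have hy : f2 ^ (n+1) ∣ (-1 : MvPolynomial (Fin 2) k) ^ (n+1) * (w 0 : MvPolynomial (Fin 2) k) :=
    (hrel.pow).dvd_of_dvd_mul_left hdvd
  have hsq : (-1 : MvPolynomial (Fin 2) k) ^ (n+1) * (-1 : MvPolynomial (Fin 2) k) ^ (n+1) = 1 := by
    rw [← pow_add]
    exact Even.neg_one_pow ⟨n+1, by ring⟩
  have hw0 : (w 0 : MvPolynomial (Fin 2) k) = (-1 : MvPolynomial (Fin 2) k) ^ (n+1) *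
      ((-1 : MvPolynomial (Fin 2) k) ^ (n+1) * (w 0 : MvPolynomial (Fin 2) k)) := by
    linear_combination (-(w 0 : MvPolynomial (Fin 2) k)) * hsq
  rw [hw0]
  exact hy.mul_left _

end Chain




noncomputable def mulMap (h : MvPolynomial (Fin 2) k) {D M' M : ℕ} (hh : h.IsHomogeneous D)
    (hM : M = D + M') :
    homogeneousSubmodule (Fin 2) k M' →ₗ[k] homogeneousSubmodule (Fin 2) k M where
  toFun g := ⟨h * (g : MvPolynomial (Fin 2) k), by
    rw [mem_homogeneousSubmodule, hM]
    exact hh.mul ((mem_homogeneousSubmodule _ _).mp g.2)⟩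
  map_add' g g' := by apply Subtype.ext; simp [mul_add]
  map_smul' c g := by apply Subtype.ext; simp [mul_smul_comm]


set_option synthInstance.maxHeartbeats 1000000 in
set_option maxHeartbeats 1000000 in
lemma ker_bound {f1 f2 : MvPolynomial (Fin 2) k} {d M e : ℕ} {n : ℕ}
    (h1 : f1.IsHomogeneous d) (h2 : f2.IsHomogeneous d) (hMe : e = d + M)
    (hf2 : f2 ≠ 0) (hrel : IsRelPrime f2 f1) (he1 : (n+2)*d ≤ e + 1) :
    finrank k (LinearMap.ker (chiMap f1 f2 h1 h2 n hMe)) ≤ e + 1 - (n+2)*d := by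
  have hring : (n+2)*d = d*(n+1) + d := by ring
  by_cases hcase : (n+2)*d ≤ e
  · -- Case A
    have hM' : M = d*(n+1) + (M - d*(n+1)) := by omega
    set M' := M - d*(n+1) with hM'def
    set μ := mulMap (f2 ^ (n+1)) (h2.pow (n+1)) hM' with hμ
    set π := (LinearMap.proj (0 : Fin (n+2))).comp
      (LinearMap.ker (chiMap f1 f2 h1 h2 n hMe)).subtype with hπ
    have hπinj : Function.Injective π := by
      intro u u' huu
      have hwk := (mem_ker_chiMap_iff ((u - u' : LinearMap.ker (chiMap f1 f2 h1 h2 n hMe)) :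
          Fin (n+2) → homogeneousSubmodule (Fin 2) k M)).mp (u - u').2
      have hval : ((u : Fin (n+2) → homogeneousSubmodule (Fin 2) k M) 0 :
          MvPolynomial (Fin 2) k) = ((u' : Fin (n+2) → homogeneousSubmodule (Fin 2) k M) 0 :
          MvPolynomial (Fin 2) k) := congrArg Subtype.val huu
      have h0 : (((u - u' : LinearMap.ker (chiMap f1 f2 h1 h2 n hMe)) :
          Fin (n+2) → homogeneousSubmodule (Fin 2) k M) 0 : MvPolynomial (Fin 2) k) = 0 := by
        simp [sub_eq_zero, hval]
      have hall := chain2 _ hwk h0 hf2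
      apply Subtype.ext
      funext i
      have := hall i
      simp only [AddSubgroupClass.coe_sub, Pi.sub_apply, Submodule.coe_sub] at this
      apply Subtype.ext
      rw [← sub_eq_zero]
      simpa using this
    have hle : LinearMap.range π ≤ LinearMap.range μ := by
      rintro x ⟨u, rfl⟩
      have hwk := (mem_ker_chiMap_iff u.1).mp u.2
      obtain ⟨g, hg⟩ := chain_dvd u.1 hwk hrel
      refine ⟨⟨homogeneousComponent M' g, homogeneousComponent_mem M' g⟩, ?_⟩
      apply Subtype.ext
      show f2 ^ (n+1) * homogeneousComponent M' g = (u.1 0 : MvPolynomial (Fin 2) k)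
      have hmem0 : (u.1 0 : MvPolynomial (Fin 2) k) ∈ homogeneousSubmodule (Fin 2) k M :=
        (u.1 0).2
      have hc : homogeneousComponent M ((u.1 0 : MvPolynomial (Fin 2) k))
          = (u.1 0 : MvPolynomial (Fin 2) k) := by
        rw [homogeneousComponent_of_mem hmem0, if_pos rfl]
      rw [← hc, hg, hc_mul_of_le (h2.pow (n+1)) g (by omega)]
    calc finrank k (LinearMap.ker (chiMap f1 f2 h1 h2 n hMe))
        = finrank k (LinearMap.range π) := (LinearMap.finrank_range_of_inj hπinj).symm
      _ ≤ finrank k (LinearMap.range μ) := Submodule.finrank_mono hle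
      _ ≤ finrank k (homogeneousSubmodule (Fin 2) k M') := LinearMap.finrank_range_le μ
      _ = M' + 1 := finrank_homog M'
      _ ≤ e + 1 - (n+2)*d := by omega
  · -- Case B : e + 1 = (n+2)*d
    have hbot : LinearMap.ker (chiMap f1 f2 h1 h2 n hMe) = ⊥ := by
      rw [eq_bot_iff]
      intro u hu
      have hwk := (mem_ker_chiMap_iff u).mp hu
      obtain ⟨g, hg⟩ := chain_dvd u hwk hrel
      have hmem0 : (u 0 : MvPolynomial (Fin 2) k) ∈ homogeneousSubmodule (Fin 2) k M :=
        (u 0).2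
      have h0 : (u 0 : MvPolynomial (Fin 2) k) = 0 := by
        have hc : homogeneousComponent M ((u 0 : MvPolynomial (Fin 2) k))
            = (u 0 : MvPolynomial (Fin 2) k) := by
          rw [homogeneousComponent_of_mem hmem0, if_pos rfl]
        rw [← hc, hg, hc_mul_of_lt (h2.pow (n+1)) g (by omega)]
      have hall := chain2 u hwk h0 hf2
      rw [Submodule.mem_bot]
      funext i
      exact Subtype.ext (hall i)
    rw [hbot]
    simp

set_option synthInstance.maxHeartbeats 1000000 in
set_option maxHeartbeats 1000000 in
lemma main_surj (f1 f2 : MvPolynomial (Fin 2) k) (d : ℕ)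
    (h1 : f1.IsHomogeneous d) (h2 : f2.IsHomogeneous d)
    (hf2 : f2 ≠ 0) (hrel : IsRelPrime f2 f1) (n e M : ℕ) (hMe : e = d + M)
    (he1 : (n + 2) * d ≤ e + 1)
    (v : Fin (n + 1) → MvPolynomial (Fin 2) k) (hv : ∀ i, (v i).IsHomogeneous e) :
    ∃ w : Fin (n + 2) → MvPolynomial (Fin 2) k,
      (∀ j, (w j).IsHomogeneous M) ∧
      ∀ i : Fin (n + 1), f1 * w i.castSucc + f2 * w i.succ = v i := by
  have hker := ker_bound h1 h2 hMe hf2 hrel he1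
  have hrank := LinearMap.finrank_range_add_finrank_ker (chiMap f1 f2 h1 h2 n hMe)
  have hdom : finrank k (Fin (n + 2) → homogeneousSubmodule (Fin 2) k M)
      = (n + 2) * (M + 1) := by
    rw [Module.finrank_pi_fintype]
    simp [finrank_homog, Finset.sum_const, Finset.card_univ]
  have hcod : finrank k (Fin (n + 1) → homogeneousSubmodule (Fin 2) k e)
      = (n + 1) * (e + 1) := by
    rw [Module.finrank_pi_fintype]
    simp [finrank_homog, Finset.sum_const, Finset.card_univ]
  rw [hdom] at hrank
  have hrle : finrank k (LinearMap.range (chiMap f1 f2 h1 h2 n hMe)) ≤ (n + 1) * (e + 1) := by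
    rw [← hcod]; exact Submodule.finrank_le _
  have key : (n + 2) * (M + 1) + (n + 2) * d = (n + 1) * (e + 1) + (e + 1) := by
    rw [hMe]; ring
  have hrangeeq : finrank k (LinearMap.range (chiMap f1 f2 h1 h2 n hMe)) = (n + 1) * (e + 1) := by omega
  have htop : LinearMap.range (chiMap f1 f2 h1 h2 n hMe) = ⊤ :=
    Submodule.eq_top_of_finrank_eq (by rw [hrangeeq, ← hcod])
  set vv : Fin (n + 1) → homogeneousSubmodule (Fin 2) k e :=
    fun i => ⟨v i, (mem_homogeneousSubmodule _ _).mpr (hv i)⟩ with hvv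
  have hmem : vv ∈ LinearMap.range (chiMap f1 f2 h1 h2 n hMe) := by rw [htop]; trivial
  obtain ⟨w, hwv⟩ := hmem
  refine ⟨fun j => (w j : MvPolynomial (Fin 2) k),
    fun j => (mem_homogeneousSubmodule _ _).mp (w j).2, fun i => ?_⟩
  have := congrArg Subtype.val (congrFun hwv i)
  simpa [chiMap, hvv] using this

end Stmt15Aux
end

/-- Buchsbaum–Rim socle degree bound: for a regular sequence `f₁, f₂` of forms of
degree `d` in `R = k[x,y]`, the `(n+1) × (n+2)` Toeplitz map `χ` with row pattern
`(f₁, f₂)` has cokernel vanishing in all degrees `e ≥ (n+2)d - 1`; i.e. every vector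
of forms of degree `e` is `χ` applied to a vector of forms of degree `e - d`. -/
theorem stmt15 (k : Type*) [Field k] (d : ℕ) (hd : 1 ≤ d)
    (f1 f2 : MvPolynomial (Fin 2) k)
    (h1 : f1.IsHomogeneous d) (h2 : f2.IsHomogeneous d)
    (hreg : RingTheory.Sequence.IsRegular (MvPolynomial (Fin 2) k) [f1, f2])
    (n : ℕ)
    (χ : Matrix (Fin (n + 1)) (Fin (n + 2)) (MvPolynomial (Fin 2) k))
    (hχ : ∀ i j, χ i j = if (j : ℕ) = (i : ℕ) then f1
      else if (j : ℕ) = (i : ℕ) + 1 then f2 else 0)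
    (e : ℕ) (he : (n + 2) * d - 1 ≤ e)
    (v : Fin (n + 1) → MvPolynomial (Fin 2) k) (hv : ∀ i, (v i).IsHomogeneous e) :
    ∃ w : Fin (n + 2) → MvPolynomial (Fin 2) k,
      (∀ j, (w j).IsHomogeneous (e - d)) ∧ χ.mulVec w = v := by
  have h2d : 2 * d ≤ (n + 2) * d := Nat.mul_le_mul_right d (by omega)
  have hde : d ≤ e := by omega
  have hMe : e = d + (e - d) := by omega
  have he1 : (n + 2) * d ≤ e + 1 := by omega
  have hf2 : f2 ≠ 0 := Stmt15Aux.f2_ne_zero hreg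
  have hrel : IsRelPrime f2 f1 := (Stmt15Aux.relprime hreg).symm
  obtain ⟨w, hwhom, hweq⟩ :=
    Stmt15Aux.main_surj f1 f2 d h1 h2 hf2 hrel n e (e - d) hMe he1 v hv
  refine ⟨w, hwhom, ?_⟩
  funext i
  show ∑ j, χ i j * w j = v i
  have hsplit : ∀ j : Fin (n + 2), χ i j * w j =
      (if j = i.castSucc then f1 * w j else 0) + (if j = i.succ then f2 * w j else 0) := by
    intro j
    rw [hχ i j]
    rcases eq_or_ne j i.castSucc with rfl | hj1
    · rw [if_pos (by simp), if_pos rfl, if_neg, add_zero]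
      intro hcontra
      have := congrArg Fin.val hcontra
      simp at this
    · rcases eq_or_ne j i.succ with rfl | hj2
      · rw [if_neg (by simp), if_pos (by simp), if_neg hj1, if_pos rfl, zero_add]
      · have hc1 : (j : ℕ) ≠ (i : ℕ) := fun h => hj1 (Fin.ext (by simp [h]))
        have hc2 : (j : ℕ) ≠ (i : ℕ) + 1 := fun h => hj2 (Fin.ext (by simp [h]))
        rw [if_neg hc1, if_neg hc2, if_neg hj1, if_neg hj2, zero_mul, add_zero]
  calc ∑ j, χ i j * w j
      = ∑ j, ((if j = i.castSucc then f1 * w j else 0)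
          + (if j = i.succ then f2 * w j else 0)) :=
        Finset.sum_congr rfl fun j _ => hsplit j
    _ = f1 * w i.castSucc + f2 * w i.succ := by
        rw [Finset.sum_add_distrib, Finset.sum_ite_eq' Finset.univ i.castSucc,
          Finset.sum_ite_eq' Finset.univ i.succ]
        simp
    _ = v i := hweq i
end
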